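/- arXiv:2003.00894 — 11 statements merged into one kernel-verified Lean document; each statement's English description precedes it below -/
import Mathlib

section
/- A metric space (Ω,d) has Nagata dimension ≤ δ on the scale s ∈ (0,∞] if and only if for every x ∈ Ω, every r < s, and every sequence of δ+2 points x₁,…,x_{δ+2} in the closed ball of radius r around x, there exist indices i ≠ j such that d(x_i, x_j) ≤ max{d(x, x_i), d(x, x_j)}. -/
open Metric ENNReal

/-- A finite family of closed balls in `Ω`, given as (centre, radius) pairs,
has multiplicity `≤ m`: every point of `Ω` belongs to at most `m` members. -/
def BallMultLE {Ω : Type*} [MetricSpace Ω] (γ : Finset (Ω × ℝ)) (m : ℕ) : Prop :=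
  ∀ y : Ω, (γ.filter fun p => dist y p.1 ≤ p.2).card ≤ m

/-- `Ω` has Nagata dimension `≤ δ` on the scale `s ∈ (0,∞]`: every finite family of
closed balls of radii `< s` admits a subfamily of multiplicity `≤ δ + 1` covering
all the centres of the original family. -/
def NagataDimLE (Ω : Type*) [MetricSpace Ω] (δ : ℕ) (s : ℝ≥0∞) : Prop :=
  ∀ γ : Finset (Ω × ℝ), (∀ p ∈ γ, 0 ≤ p.2 ∧ ENNReal.ofReal p.2 < s) →
    ∃ γ' ⊆ γ, BallMultLE γ' (δ + 1) ∧ ∀ p ∈ γ, ∃ q ∈ γ', dist p.1 q.1 ≤ q.2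

/-
Forward direction: the `δ + 2` balls `B(xᵢ, d(x, xᵢ))` all contain `x`, so a subfamily of
multiplicity `≤ δ + 1` either misses one of them, and the ball covering its centre gives the
pair, or two of them coincide.

Backward direction: choose greedily, by decreasing radius, a subfamily covering all the
centres in which any two balls `B(a, ρ)`, `B(b, σ)` are separated, `max ρ σ < d(a, b)`. If
`δ + 2` of the chosen balls contained a common point `y`, their centres would lie in the ball
around `y` of the largest of their radii, and the hypothesis would yield two of them violating
separation.
-/

section

variable {Ω : Type*} [MetricSpace Ω]

lemma card_le_of_ballMultLE_of_forall_mem {γ : Finset (Ω × ℝ)} {m : ℕ}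
    (hγ : BallMultLE γ m) {y : Ω} (hy : ∀ p ∈ γ, dist y p.1 ≤ p.2) : γ.card ≤ m := by
  simpa only [Finset.filter_true_of_mem hy] using hγ y

lemma exists_close_pair_of_nagataDimLE {δ : ℕ} {s : ℝ≥0∞} (H : NagataDimLE Ω δ s)
    (x : Ω) {r : ℝ} (hrs : ENNReal.ofReal r < s) (f : Fin (δ + 2) → Ω)
    (hf : ∀ i, f i ∈ closedBall x r) :
    ∃ i j, i ≠ j ∧ dist (f i) (f j) ≤ max (dist x (f i)) (dist x (f j)) := by
  classical
  set centredBall : Fin (δ + 2) → Ω × ℝ := fun i => (f i, dist x (f i))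
  obtain ⟨γ', hγ', hmult, hcov⟩ := H (Finset.univ.image centredBall) <| by
    simp only [Finset.mem_image, Finset.mem_univ, true_and, forall_exists_index,
      forall_apply_eq_imp_iff]
    exact fun i => ⟨dist_nonneg,
      (ENNReal.ofReal_le_ofReal (mem_closedBall_comm.1 (hf i))).trans_lt hrs⟩
  have hcard : γ'.card < (Finset.univ : Finset (Fin (δ + 2))).card := by
    refine (card_le_of_ballMultLE_of_forall_mem hmult (y := x) fun q hq => ?_).trans_lt (by simp)
    obtain ⟨i, -, rfl⟩ := Finset.mem_image.1 (hγ' hq)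
    exact le_rfl
  by_cases hall : ∀ i, centredBall i ∈ γ'
  · obtain ⟨i, -, j, -, hij, hsame⟩ :=
      Finset.exists_ne_map_eq_of_card_lt_of_maps_to hcard fun i _ => hall i
    refine ⟨i, j, hij, ?_⟩
    rw [show f i = f j from congrArg Prod.fst hsame, dist_self]
    exact le_max_of_le_left dist_nonneg
  · push Not at hall
    obtain ⟨i, hi⟩ := hall
    obtain ⟨q, hq, hiq⟩ := hcov (centredBall i) (Finset.mem_image_of_mem _ (Finset.mem_univ i))
    obtain ⟨j, -, rfl⟩ := Finset.mem_image.1 (hγ' hq)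
    exact ⟨i, j, by rintro rfl; exact hi hq, hiq.trans (le_max_right _ _)⟩

lemma exists_separated_subset_covering (γ : Finset (Ω × ℝ)) (hγ : ∀ p ∈ γ, 0 ≤ p.2) :
    ∃ γ' ⊆ γ, (γ' : Set (Ω × ℝ)).Pairwise (fun p q => max p.2 q.2 < dist p.1 q.1) ∧
      ∀ p ∈ γ, ∃ q ∈ γ', dist p.1 q.1 ≤ q.2 := by
  classical
  induction γ using Finset.induction_on_min_value (fun p : Ω × ℝ => p.2) with
  | empty => exact ⟨∅, subset_rfl, by simp, by simp⟩
  | insert a γ _ ha_min ih =>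
    obtain ⟨γ', hγ', hsep, hcov⟩ := ih fun p hp => hγ p (Finset.mem_insert_of_mem hp)
    by_cases ha : ∃ q ∈ γ', dist a.1 q.1 ≤ q.2
    · refine ⟨γ', hγ'.trans (Finset.subset_insert _ _), hsep, ?_⟩
      simpa only [Finset.forall_mem_insert] using ⟨ha, hcov⟩
    · push Not at ha
      refine ⟨insert a γ', Finset.insert_subset_insert _ hγ', ?_, ?_⟩
      · rw [Finset.coe_insert, Set.pairwise_insert]
        refine ⟨hsep, fun q hq _ => ?_⟩
        rw [max_eq_right (ha_min q (hγ' hq)), max_eq_left (ha_min q (hγ' hq)), dist_comm q.1]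
        exact ⟨ha q hq, ha q hq⟩
      · rw [Finset.forall_mem_insert]
        have ha_self : dist a.1 a.1 ≤ a.2 := by
          simpa using hγ a (Finset.mem_insert_self _ _)
        refine ⟨⟨a, Finset.mem_insert_self _ _, ha_self⟩, fun p hp => ?_⟩
        obtain ⟨q, hq, hpq⟩ := hcov p hp
        exact ⟨q, Finset.mem_insert_of_mem hq, hpq⟩

lemma card_le_of_pairwise_separated {δ : ℕ} {s : ℝ≥0∞}
    (H : ∀ (x : Ω) (r : ℝ), 0 ≤ r → ENNReal.ofReal r < s →
      ∀ f : Fin (δ + 2) → Ω, (∀ i, f i ∈ closedBall x r) →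
        ∃ i j, i ≠ j ∧ dist (f i) (f j) ≤ max (dist x (f i)) (dist x (f j)))
    {S : Finset (Ω × ℝ)}
    (hsep : (S : Set (Ω × ℝ)).Pairwise (fun p q => max p.2 q.2 < dist p.1 q.1))
    {y : Ω} (hy : ∀ p ∈ S, dist y p.1 ≤ p.2) {r : ℝ} (hr0 : 0 ≤ r)
    (hrs : ENNReal.ofReal r < s) (hr : ∀ p ∈ S, p.2 ≤ r) : S.card ≤ δ + 1 := by
  by_contra! hcard
  obtain ⟨e⟩ : Nonempty (Fin (δ + 2) ↪ S) :=
    Function.Embedding.nonempty_of_card_le (by rw [Fintype.card_fin, Fintype.card_coe]; omega)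
  obtain ⟨i, j, hij, hclose⟩ := H y r hr0 hrs (fun i => (e i).1.1) fun i =>
    mem_closedBall_comm.1 ((hy _ (e i).2).trans (hr _ (e i).2))
  have hfar := hsep (e i).2 (e j).2 (Subtype.val_injective.ne (e.injective.ne hij))
  exact hfar.not_ge (hclose.trans (max_le_max (hy _ (e i).2) (hy _ (e j).2)))

lemma nagataDimLE_of_forall_exists_close_pair {δ : ℕ} {s : ℝ≥0∞}
    (H : ∀ (x : Ω) (r : ℝ), 0 ≤ r → ENNReal.ofReal r < s →
      ∀ f : Fin (δ + 2) → Ω, (∀ i, f i ∈ closedBall x r) →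
        ∃ i j, i ≠ j ∧ dist (f i) (f j) ≤ max (dist x (f i)) (dist x (f j))) :
    NagataDimLE Ω δ s := by
  classical
  intro γ hγ
  obtain ⟨γ', hγ', hsep, hcov⟩ := exists_separated_subset_covering γ fun p hp => (hγ p hp).1
  refine ⟨γ', hγ', fun y => ?_, hcov⟩
  set S := γ'.filter fun p => dist y p.1 ≤ p.2
  obtain hS | hS := S.eq_empty_or_nonempty
  · simp [hS]
  obtain ⟨p, hpS, hp_max⟩ := S.exists_max_image (·.2) hS
  have hpγ : p ∈ γ := hγ' (Finset.mem_filter.1 hpS).1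
  exact card_le_of_pairwise_separated H (hsep.mono (Finset.filter_subset _ _))
    (fun q hq => (Finset.mem_filter.1 hq).2) (hγ p hpγ).1 (hγ p hpγ).2 hp_max

end

theorem nagataDimLE_iff_general {Ω : Type*} [MetricSpace Ω] (δ : ℕ) (s : ℝ≥0∞) :
    NagataDimLE Ω δ s ↔
      ∀ (x : Ω) (r : ℝ), 0 ≤ r → ENNReal.ofReal r < s →
        ∀ f : Fin (δ + 2) → Ω, (∀ i, f i ∈ closedBall x r) →
          ∃ i j, i ≠ j ∧ dist (f i) (f j) ≤ max (dist x (f i)) (dist x (f j)) :=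
  ⟨fun H x _ _ hrs f hf => exists_close_pair_of_nagataDimLE H x hrs f hf,
    nagataDimLE_of_forall_exists_close_pair⟩

/-- A metric space has Nagata dimension `≤ δ` on the scale `s` iff among any
`δ + 2` points of a closed ball of radius `r < s` around `x`, two distinct indices
`i ≠ j` satisfy `d(xᵢ, xⱼ) ≤ max {d(x, xᵢ), d(x, xⱼ)}`. -/
theorem nagataDimLE_iff {Ω : Type*} [MetricSpace Ω] (δ : ℕ) (s : ℝ≥0∞) (hs : 0 < s) :
    NagataDimLE Ω δ s ↔
      ∀ (x : Ω) (r : ℝ), 0 ≤ r → ENNReal.ofReal r < s →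
        ∀ f : Fin (δ + 2) → Ω, (∀ i, f i ∈ closedBall x r) →
          ∃ i j, i ≠ j ∧ dist (f i) (f j) ≤ max (dist x (f i)) (dist x (f j)) :=
  nagataDimLE_iff_general δ s
end

section
/- A metric space Ω has Nagata dimension 0 on the scale +∞ (i.e., every finite family of closed balls admits a subfamily of multiplicity ≤ 1 covering all centres) if and only if the metric is an ultrametric, i.e., satisfies d(x,z) ≤ max{d(x,y), d(y,z)} for all x,y,z. -/
open Metric ENNReal

/-!
If the metric is an ultrametric, two intersecting closed balls are nested, so the smaller
one has its centre in the larger. Greedily keeping a ball of maximal radius, discarding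
the balls that meet it, and recursing on the rest therefore yields a disjoint subfamily
covering all centres. Conversely, if `d(x, z) > max (d(x, y), d(y, z))`, the balls
`B(x, d(x, y))` and `B(z, d(y, z))` both contain `y` and neither contains the other's
centre, so a subfamily covering both centres must keep both, and it has multiplicity 2
at `y`.
-/

section

variable {Ω : Type*}

theorem ballMultLE_one_iff [MetricSpace Ω] {γ : Finset (Ω × ℝ)} :
    BallMultLE γ 1 ↔ (γ : Set (Ω × ℝ)).PairwiseDisjoint fun p => closedBall p.1 p.2 := by
  simp only [BallMultLE, Finset.card_le_one, Finset.mem_filter, Set.PairwiseDisjoint,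
    Set.Pairwise, Finset.mem_coe, Function.onFun, Set.disjoint_left, mem_closedBall]
  constructor
  · intro h p hp q hq hpq y hyp hyq
    exact hpq (h y p ⟨hp, hyp⟩ q ⟨hq, hyq⟩)
  · rintro h y p ⟨hp, hyp⟩ q ⟨hq, hyq⟩
    by_contra hpq
    exact h hp hq hpq hyp hyq

theorem IsUltrametricDist.mem_closedBall_of_not_disjoint [PseudoMetricSpace Ω]
    [IsUltrametricDist Ω] {x y : Ω} {r s : ℝ} (hsr : s ≤ r)
    (h : ¬Disjoint (closedBall x r) (closedBall y s)) : y ∈ closedBall x r := by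
  obtain ⟨w, hwx, hwy⟩ := Set.not_disjoint_iff.1 h
  rw [closedBall_eq_of_mem hwx, mem_closedBall_comm]
  exact closedBall_subset_closedBall hsr hwy

theorem IsUltrametricDist.exists_pairwiseDisjoint_subset_covering [MetricSpace Ω]
    [IsUltrametricDist Ω] (γ : Finset (Ω × ℝ)) (hγ : ∀ p ∈ γ, 0 ≤ p.2) :
    ∃ γ' ⊆ γ, (γ' : Set (Ω × ℝ)).PairwiseDisjoint (fun p => closedBall p.1 p.2) ∧
      ∀ p ∈ γ, ∃ q ∈ γ', p.1 ∈ closedBall q.1 q.2 := by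
  classical
  induction γ using Finset.strongInduction with
  | H γ ih =>
    rcases γ.eq_empty_or_nonempty with rfl | hne
    · exact ⟨∅, subset_rfl, by simp, by simp⟩
    obtain ⟨p, hp, hp_max⟩ := γ.exists_max_image Prod.snd hne
    set γ₀ := γ.filter fun q => Disjoint (closedBall p.1 p.2) (closedBall q.1 q.2)
    have hp_meets_self : ¬Disjoint (closedBall p.1 p.2) (closedBall p.1 p.2) :=
      Set.not_disjoint_iff.2 ⟨p.1, mem_closedBall_self (hγ p hp), mem_closedBall_self (hγ p hp)⟩
    obtain ⟨γ₀', hγ₀'_sub, hγ₀'_disj, hγ₀'_cov⟩ :=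
      ih γ₀ (Finset.filter_ssubset.2 ⟨p, hp, hp_meets_self⟩)
        fun q hq => hγ q (Finset.mem_filter.1 hq).1
    refine ⟨insert p γ₀', Finset.insert_subset hp (hγ₀'_sub.trans (Finset.filter_subset _ _)),
      ?_, fun q hq => ?_⟩
    · rw [Finset.coe_insert]
      exact hγ₀'_disj.insert fun q hq _ => (Finset.mem_filter.1 (hγ₀'_sub hq)).2
    · by_cases hq₀ : q ∈ γ₀
      · obtain ⟨c, hc, hqc⟩ := hγ₀'_cov q hq₀
        exact ⟨c, Finset.mem_insert_of_mem hc, hqc⟩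
      · have hq_meets_p : ¬Disjoint (closedBall p.1 p.2) (closedBall q.1 q.2) :=
          Finset.mem_filter.not.1 hq₀ ∘ And.intro hq
        exact ⟨p, Finset.mem_insert_self _ _,
          mem_closedBall_of_not_disjoint (hp_max q hq) hq_meets_p⟩

theorem nagataDimLE_zero_top_of_isUltrametricDist [MetricSpace Ω] [IsUltrametricDist Ω] :
    NagataDimLE Ω 0 ⊤ := fun γ hγ => by
  obtain ⟨γ', hsub, hdisj, hcov⟩ :=
    IsUltrametricDist.exists_pairwiseDisjoint_subset_covering γ fun p hp => (hγ p hp).1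
  exact ⟨γ', hsub, ballMultLE_one_iff.2 hdisj, hcov⟩

theorem mem_or_mem_closedBall_of_subset_pair [MetricSpace Ω] [DecidableEq Ω]
    {γ : Finset (Ω × ℝ)} {p q : Ω × ℝ} (hsub : γ ⊆ {p, q})
    (hcov : ∃ c ∈ γ, p.1 ∈ closedBall c.1 c.2) :
    p ∈ γ ∨ p.1 ∈ closedBall q.1 q.2 := by
  obtain ⟨c, hc, hpc⟩ := hcov
  have hc_pair : c = p ∨ c = q := by simpa using hsub hc
  rcases hc_pair with rfl | rfl
  · exact Or.inl hc
  · exact Or.inr hpc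

theorem NagataDimLE.mem_closedBall_or_mem_closedBall [MetricSpace Ω] (h : NagataDimLE Ω 0 ⊤)
    {x z : Ω} {r s : ℝ} (hr : 0 ≤ r) (hs : 0 ≤ s)
    (hxz : ¬Disjoint (closedBall x r) (closedBall z s)) :
    x ∈ closedBall z s ∨ z ∈ closedBall x r := by
  classical
  obtain ⟨γ', hsub, hmult, hcov⟩ := h {(x, r), (z, s)} (by simp [hr, hs])
  rcases mem_or_mem_closedBall_of_subset_pair hsub (hcov _ (by simp)) with hx | hx
  · rcases mem_or_mem_closedBall_of_subset_pair (p := (z, s)) (q := (x, r))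
      (hsub.trans (Finset.pair_comm _ _).subset) (hcov _ (by simp)) with hz | hz
    · by_cases hxz_eq : (x, r) = (z, s)
      · cases hxz_eq
        exact Or.inr (mem_closedBall_self hr)
      · exact absurd (ballMultLE_one_iff.1 hmult hx hz hxz_eq) hxz
    · exact Or.inr hz
  · exact Or.inl hx

theorem NagataDimLE.isUltrametricDist [MetricSpace Ω] (h : NagataDimLE Ω 0 ⊤) :
    IsUltrametricDist Ω := by
  refine ⟨fun x y z => ?_⟩
  have hy : y ∈ closedBall x (dist x y) ∩ closedBall z (dist y z) :=
    ⟨mem_closedBall.2 (dist_comm y x).le, mem_closedBall.2 le_rfl⟩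
  rcases h.mem_closedBall_or_mem_closedBall dist_nonneg dist_nonneg
      (Set.not_disjoint_iff_nonempty_inter.2 ⟨y, hy⟩) with hx | hz
  · exact le_max_of_le_right hx
  · exact le_max_of_le_left (dist_comm x z ▸ hz)

end

/-- A metric space has Nagata dimension `0` on the scale `+∞` if and only if its
metric is an ultrametric (non-archimedean). -/
theorem nagataDimLE_zero_top_iff_ultrametric (Ω : Type*) [MetricSpace Ω] :
    NagataDimLE Ω 0 ⊤ ↔ ∀ x y z : Ω, dist x z ≤ max (dist x y) (dist y z) :=
  ⟨fun h => h.isUltrametricDist.dist_triangle_max, fun hu =>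
    have : IsUltrametricDist Ω := ⟨hu⟩
    nagataDimLE_zero_top_of_isUltrametricDist⟩
end

section
/- Stone's geometric lemma for ℝ^d: there is a constant C = C(d) such that for any finite sample x₁,…,x_n in ℝ^d, any point x ∈ ℝ^d, and any k ∈ ℕ₊, the number of indices i with x_i ≠ x such that x is among the k nearest neighbours of x_i inside the modified sample x₁,…,x_{i−1},x,x_{i+1},…,x_n (for any tie-breaking strategy) is at most Ck. -/
/-!
Cover the unit sphere by finitely many balls of radius `1/2`; this splits the directions
`xᵢ - x` into finitely many cones of angle `< π/3`. Within one cone, the sample point `xᵢ`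
farthest from `x` is strictly closer to every other point of the cone than `x` is, so if `x` is
among its `k` nearest neighbours the cone contains at most `k` points. Hence `C(d)` can be taken
to be the number of balls.
-/

open Finset NormedSpace
open scoped RealInnerProductSpace

/-- `x` is among the `k` nearest neighbours of `xs i` in the sample with `xs i` replaced by `x`
(for some tie-breaking) iff `closerCount xs x i < k`. -/
noncomputable def closerCount {α ι : Type*} [Dist α] [Fintype ι] [DecidableEq ι] (xs : ι → α) (x : α)
    (i : ι) : ℕ :=
  #{j | j ≠ i ∧ dist (xs j) (xs i) < dist x (xs i)}

lemma exists_finset_dist_normalize_lt_half (E : Type*) [NormedAddCommGroup E] [NormedSpace ℝ E]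
    [ProperSpace E] : ∃ t : Finset E, ∀ v : E, v ≠ 0 → ∃ u ∈ t, dist (normalize v) u < 1 / 2 := by
  obtain ⟨t, -, hcover⟩ := (isCompact_sphere (0 : E) 1).elim_nhds_subcover
    (fun u => Metric.ball u (1 / 2)) fun u _ => Metric.ball_mem_nhds u (by norm_num)
  refine ⟨t, fun v hv => ?_⟩
  have hmem : normalize v ∈ Metric.sphere (0 : E) 1 := by
    simpa using norm_normalize_eq_one_iff.2 hv
  simpa using hcover hmem

variable {E : Type*} [NormedAddCommGroup E] [InnerProductSpace ℝ E]

lemma half_lt_inner_normalize {v w : E} (hv : v ≠ 0) (hw : w ≠ 0)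
    (h : dist (normalize v) (normalize w) < 1) : 1 / 2 < ⟪normalize v, normalize w⟫ := by
  have hsq := norm_sub_sq_real (normalize v) (normalize w)
  rw [norm_normalize_eq_one_iff.2 hv, norm_normalize_eq_one_iff.2 hw, ← dist_eq_norm] at hsq
  nlinarith [dist_nonneg (x := normalize v) (y := normalize w)]

/-- The hypothesis `h` says that the angle between `v` and `w` is `< π/3`. -/
lemma norm_sub_lt_of_dist_normalize_lt_one {v w : E} (hv : v ≠ 0) (hle : ‖v‖ ≤ ‖w‖)
    (h : dist (normalize v) (normalize w) < 1) : ‖v - w‖ < ‖w‖ := by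
  have hv₀ : 0 < ‖v‖ := norm_pos_iff.2 hv
  have hw : w ≠ 0 := norm_pos_iff.1 (hv₀.trans_le hle)
  have hinner : ⟪v, w⟫ = ‖v‖ * ‖w‖ * ⟪normalize v, normalize w⟫ := by
    conv_lhs => rw [← norm_smul_normalize v, ← norm_smul_normalize w]
    rw [real_inner_smul_left, real_inner_smul_right, mul_assoc]
  have hpos : 0 < ‖v‖ * ‖w‖ := mul_pos hv₀ (norm_pos_iff.2 hw)
  have hcos := half_lt_inner_normalize hv hw h
  have hsq : ‖v - w‖ ^ 2 < ‖w‖ ^ 2 := by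
    rw [norm_sub_sq_real, hinner]
    nlinarith [mul_le_mul_of_nonneg_left hle hv₀.le]
  exact lt_of_pow_lt_pow_left₀ 2 (norm_nonneg w) hsq

lemma card_le_of_dist_normalize_sub_lt_one {ι : Type*} [Fintype ι] [DecidableEq ι]
    {xs : ι → E} {x : E} {k : ℕ} {s : Finset ι}
    (hs : ∀ i ∈ s, xs i ≠ x ∧ closerCount xs x i < k)
    (hcone : ∀ i ∈ s, ∀ j ∈ s, dist (normalize (xs j - x)) (normalize (xs i - x)) < 1) :
    #s ≤ k := by
  rcases s.eq_empty_or_nonempty with rfl | hne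
  · simp
  obtain ⟨i, hi, hfar⟩ := s.exists_max_image (fun j => ‖xs j - x‖) hne
  have hcloser : s.erase i ⊆ ({j | j ≠ i ∧ dist (xs j) (xs i) < dist x (xs i)} : Finset ι) := by
    intro j hj
    obtain ⟨hji, hj⟩ := mem_erase.1 hj
    have hlt := norm_sub_lt_of_dist_normalize_lt_one (sub_ne_zero.2 (hs j hj).1) (hfar j hj)
      (hcone i hi j hj)
    rw [sub_sub_sub_cancel_right] at hlt
    simpa [hji, dist_eq_norm, norm_sub_rev x] using hlt
  calc #s = #(s.erase i) + 1 := (card_erase_add_one hi).symm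
    _ ≤ closerCount xs x i + 1 := Nat.succ_le_succ (card_le_card hcloser)
    _ ≤ k := (hs i hi).2

theorem exists_card_filter_closerCount_lt_le_mul [ProperSpace E] [DecidableEq E] :
    ∃ C : ℕ, ∀ {ι : Type*} [Fintype ι] [DecidableEq ι] (xs : ι → E) (x : E) (k : ℕ),
      #{i | xs i ≠ x ∧ closerCount xs x i < k} ≤ C * k := by
  obtain ⟨t, ht⟩ := exists_finset_dist_normalize_lt_half E
  refine ⟨#t, fun xs x k => ?_⟩
  set S : Finset _ := {i | xs i ≠ x ∧ closerCount xs x i < k}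
  set cone : E → Finset _ := fun u => {i ∈ S | dist (normalize (xs i - x)) u < 1 / 2}
  have hcover : S ⊆ t.biUnion cone := fun i hi => by
    obtain ⟨u, hu, hiu⟩ := ht _ (sub_ne_zero.2 (mem_filter.1 hi).2.1)
    exact mem_biUnion.2 ⟨u, hu, mem_filter.2 ⟨hi, hiu⟩⟩
  have hcard : ∀ u ∈ t, #(cone u) ≤ k := fun u _ =>
    card_le_of_dist_normalize_sub_lt_one (fun i hi => (mem_filter.1 (mem_filter.1 hi).1).2)
      fun i hi j hj => by
        have := dist_triangle_right (normalize (xs j - x)) (normalize (xs i - x)) u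
        linarith [(mem_filter.1 hi).2, (mem_filter.1 hj).2]
  exact (card_le_card hcover).trans (card_biUnion_le_card_mul t cone k hcard)

/-- Stone's geometric lemma for `ℝ^d`: there is a constant `C = C(d)` such that for
every finite sample `x₁, …, xₙ` in `ℝ^d`, every point `x`, and every `k ≥ 1`, the
number of indices `i` with `xᵢ ≠ x` such that `x` can be among the `k` nearest
neighbours of `xᵢ` in the sample `x₁, …, x_{i-1}, x, x_{i+1}, …, xₙ` (under some,
i.e. any, tie-breaking: strictly fewer than `k` sample points other than `x`
lie strictly closer to `xᵢ` than `x` does) is at most `C * k`. -/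
theorem stone_geometric_lemma_euclidean (d : ℕ) :
    ∃ C : ℕ, ∀ (n : ℕ) (xs : Fin n → EuclideanSpace ℝ (Fin d))
      (x : EuclideanSpace ℝ (Fin d)) (k : ℕ), 0 < k →
      (univ.filter fun i : Fin n =>
          xs i ≠ x ∧
            (univ.filter fun j : Fin n =>
                j ≠ i ∧ dist (xs j) (xs i) < dist x (xs i)).card < k).card
        ≤ C * k := by
  obtain ⟨C, hC⟩ := exists_card_filter_closerCount_lt_le_mul (E := EuclideanSpace ℝ (Fin d))
  exact ⟨C, fun n xs x k _ => hC xs x k⟩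
end

section
/- In any inner product space, if x, y, and z are points such that the angle at x between the vectors y − x and z − x is strictly less than π/3 and ‖y − x‖ ≤ ‖z − x‖, then ‖z − y‖ < ‖z − x‖. -/
/-!
With `a = y - x` and `b = z - x`, `‖b - a‖² = ‖b‖² - (2⟪a, b⟫ - ‖a‖²)`, and an angle below `π/3`
means `cos > 1/2`, so `2⟪a, b⟫ > ‖a‖‖b‖ ≥ ‖a‖²`.
-/

open InnerProductGeometry Real RealInnerProductSpace

section

variable {E : Type*} [NormedAddCommGroup E] [InnerProductSpace ℝ E]

theorem InnerProductGeometry.ne_zero_left_of_angle_lt_pi_div_two {a b : E}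
    (h : angle a b < π / 2) : a ≠ 0 := by
  rintro rfl
  exact h.ne (angle_zero_left b)

theorem InnerProductGeometry.ne_zero_right_of_angle_lt_pi_div_two {a b : E}
    (h : angle a b < π / 2) : b ≠ 0 := by
  rintro rfl
  exact h.ne (angle_zero_right a)

theorem InnerProductGeometry.norm_mul_norm_lt_two_mul_inner_of_angle_lt_pi_div_three {a b : E}
    (h : angle a b < π / 3) : ‖a‖ * ‖b‖ < 2 * ⟪a, b⟫ := by
  have h' : angle a b < π / 2 := h.trans (by linarith [pi_pos])
  have hab : 0 < ‖a‖ * ‖b‖ :=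
    mul_pos (norm_pos_iff.2 (ne_zero_left_of_angle_lt_pi_div_two h'))
      (norm_pos_iff.2 (ne_zero_right_of_angle_lt_pi_div_two h'))
  have hcos : 1 / 2 < cos (angle a b) := by
    rw [← cos_pi_div_three]
    exact cos_lt_cos_of_nonneg_of_le_pi (angle_nonneg a b) (by linarith [pi_pos]) h
  rw [← cos_angle_mul_norm_mul_norm]
  nlinarith

theorem norm_sub_lt_norm_of_sq_norm_lt_two_mul_inner {a b : E} (h : ‖a‖ ^ 2 < 2 * ⟪a, b⟫) :
    ‖b - a‖ < ‖b‖ := by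
  have hsq : ‖b - a‖ ^ 2 < ‖b‖ ^ 2 := by
    rw [norm_sub_sq_real, real_inner_comm]
    linarith
  exact lt_of_pow_lt_pow_left₀ 2 (norm_nonneg b) hsq

end

/-- In an inner product space, if the angle at `x` between `y - x` and `z - x` is
strictly less than `π/3` and `‖y - x‖ ≤ ‖z - x‖`, then `‖z - y‖ < ‖z - x‖`. -/
theorem stone_cone_inequality {E : Type*} [NormedAddCommGroup E] [InnerProductSpace ℝ E]
    (x y z : E) (hangle : InnerProductGeometry.angle (y - x) (z - x) < π / 3)
    (hle : ‖y - x‖ ≤ ‖z - x‖) : ‖z - y‖ < ‖z - x‖ := by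
  rw [← sub_sub_sub_cancel_right z y x]
  apply norm_sub_lt_norm_of_sq_norm_lt_two_mul_inner
  calc ‖y - x‖ ^ 2 = ‖y - x‖ * ‖y - x‖ := sq _
    _ ≤ ‖y - x‖ * ‖z - x‖ := by gcongr
    _ < 2 * ⟪y - x, z - x⟫ := norm_mul_norm_lt_two_mul_inner_of_angle_lt_pi_div_three hangle
end

section
/- In the Euclidean plane ℝ², the family of five closed unit balls centred at the fifth roots of unity exp(2πik/5), k = 1,…,5 (viewed as points of ℝ²), has multiplicity 5 and no proper subfamily covers all five centres; consequently the Nagata dimension of ℝ² is at least 4. -/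
/-!
Distinct fifth roots of unity are at distance `2 |sin (π j / 5)| > 1` from each other, since
`π j / 5` (for `0 < |j| ≤ 4`) lies strictly between `π / 6` and `5 π / 6`, whereas the origin is at
distance `1` from all of them. After scaling by any `r` below the scale, the five balls of radius
`r` around the scaled roots therefore all contain `0`, and none contains the centre of another:
any subfamily covering the centres is the whole family, whose multiplicity is `5 > 3 + 1`.
-/

open Metric Complex ENNReal

section NagataDim

variable {Ω : Type*} [MetricSpace Ω]

theorem BallMultLE.card_le_of_forall_mem {γ : Finset (Ω × ℝ)} {m : ℕ} (h : BallMultLE γ m)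
    {y : Ω} (hy : ∀ p ∈ γ, dist y p.1 ≤ p.2) : γ.card ≤ m := by
  simpa [Finset.filter_true_of_mem hy] using h y

theorem eq_of_subset_of_forall_exists_dist_le {γ γ' : Finset (Ω × ℝ)} (hsub : γ' ⊆ γ)
    (hsep : ∀ p ∈ γ, ∀ q ∈ γ, p ≠ q → q.2 < dist p.1 q.1)
    (hcov : ∀ p ∈ γ, ∃ q ∈ γ', dist p.1 q.1 ≤ q.2) : γ' = γ := by
  refine hsub.antisymm fun p hp => ?_
  obtain ⟨q, hq, hpq⟩ := hcov p hp
  obtain rfl : p = q := by_contra fun hne => (hsep p hp q (hsub hq) hne).not_ge hpq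
  exact hq

theorem not_nagataDimLE_of_separated_of_forall_mem {δ : ℕ} {s : ℝ≥0∞} (γ : Finset (Ω × ℝ))
    (hγ : ∀ p ∈ γ, 0 ≤ p.2 ∧ ENNReal.ofReal p.2 < s) (y : Ω) (hy : ∀ p ∈ γ, dist y p.1 ≤ p.2)
    (hsep : ∀ p ∈ γ, ∀ q ∈ γ, p ≠ q → q.2 < dist p.1 q.1) (hcard : δ + 1 < γ.card) :
    ¬ NagataDimLE Ω δ s := fun h => by
  obtain ⟨γ', hsub, hmult, hcov⟩ := h γ hγ
  rw [eq_of_subset_of_forall_exists_dist_le hsub hsep hcov] at hmult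
  exact hcard.not_ge (hmult.card_le_of_forall_mem hy)

theorem not_nagataDimLE_of_pairwise_lt_dist {δ : ℕ} {s : ℝ≥0∞} {ι : Type*} [Fintype ι]
    (c : ι → Ω) {r : ℝ} (hr : 0 ≤ r) (hrs : ENNReal.ofReal r < s) (y : Ω)
    (hy : ∀ i, dist y (c i) ≤ r) (hsep : Pairwise fun i j => r < dist (c i) (c j))
    (hcard : δ + 1 < Fintype.card ι) : ¬ NagataDimLE Ω δ s := by
  classical
  have hinj : Function.Injective fun i => (c i, r) := fun i j hij => by
    by_contra hne
    have hsep_ij : r < dist (c i) (c j) := hsep hne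
    rw [(Prod.mk.inj hij).1, dist_self] at hsep_ij
    exact hsep_ij.not_ge hr
  refine not_nagataDimLE_of_separated_of_forall_mem (Finset.univ.image fun i => (c i, r))
    ?_ y ?_ ?_ (by rwa [Finset.card_image_of_injective _ hinj, Finset.card_univ])
  all_goals simp only [Finset.forall_mem_image, Finset.mem_univ, forall_const]
  · exact fun _ => ⟨hr, hrs⟩
  · exact hy
  · exact fun i j hij => hsep fun h => hij (h ▸ rfl)

end NagataDim

open Real

theorem Real.one_half_lt_sin_of_mem_Ioo {x : ℝ} (hx : x ∈ Set.Ioo (π / 6) (5 * π / 6)) :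
    1 / 2 < sin x := by
  have hπ := pi_pos
  have h5 : sin (5 * π / 6) = 1 / 2 := by
    rw [show 5 * π / 6 = π - π / 6 by ring, sin_pi_sub, sin_pi_div_six]
  have := strictConcaveOn_sin_Icc.lt_on_openSegment (x := π / 6) (y := 5 * π / 6)
    ⟨by positivity, by linarith⟩ ⟨by positivity, by linarith⟩ (by linarith)
    (by rwa [openSegment_eq_Ioo (by linarith)])
  rwa [sin_pi_div_six, h5, min_self] at this

theorem Complex.dist_exp_mul_I (a b : ℝ) :
    dist (exp (a * I)) (exp (b * I)) = 2 * |Real.sin ((a - b) / 2)| := by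
  have : exp (a * I) - exp (b * I) = exp (b * I) * (exp (I * ↑(a - b)) - 1) := by
    rw [mul_sub, ← exp_add]; push_cast; ring_nf
  rw [dist_eq, this, norm_mul, norm_exp_ofReal_mul_I, one_mul, norm_exp_I_mul_ofReal_sub_one,
    norm_mul, Real.norm_ofNat, Real.norm_eq_abs]

theorem Real.one_half_lt_abs_sin_pi_mul_div_five {j : ℤ} (h0 : j ≠ 0) (h4 : |j| ≤ 4) :
    1 / 2 < |sin (π * j / 5)| := by
  have habs : |sin (π * j / 5)| = |sin (π * |j| / 5)| := by
    rcases abs_choice j with h | h <;> rw [h]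
    push_cast
    rw [mul_neg, neg_div, sin_neg, abs_neg]
  have h1 : (1 : ℝ) ≤ |j| := by exact_mod_cast Int.one_le_abs h0
  have h4' : ((|j| : ℤ) : ℝ) ≤ 4 := by exact_mod_cast h4
  have hπ := pi_pos
  have hsin := one_half_lt_sin_of_mem_Ioo (x := π * |j| / 5) ⟨by nlinarith, by nlinarith⟩
  rwa [habs, abs_of_pos (by linarith)]

noncomputable def fifthRoot (k : Fin 5) : ℂ := exp (2 * π * I * ((k : ℕ) + 1) / 5)

theorem fifthRoot_eq (k : Fin 5) : fifthRoot k = exp (↑(2 * π * ((k : ℕ) + 1) / 5) * I) := by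
  rw [fifthRoot]; push_cast; ring_nf

theorem norm_fifthRoot (k : Fin 5) : ‖fifthRoot k‖ = 1 := by
  rw [fifthRoot_eq, norm_exp_ofReal_mul_I]

theorem one_lt_dist_fifthRoot {k l : Fin 5} (h : k ≠ l) :
    1 < dist (fifthRoot k) (fifthRoot l) := by
  have hj : (2 * π * ((k : ℕ) + 1) / 5 - 2 * π * ((l : ℕ) + 1) / 5) / 2
      = π * (((k : ℕ) - (l : ℕ) : ℤ) : ℝ) / 5 := by push_cast; ring
  have hkl : ((k : ℕ) : ℤ) - (l : ℕ) ≠ 0 := by omega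
  have hsin := one_half_lt_abs_sin_pi_mul_div_five hkl (abs_le.2 ⟨by omega, by omega⟩)
  rw [fifthRoot_eq, fifthRoot_eq, dist_exp_mul_I, hj]
  linarith

/-- In the Euclidean plane `ℝ² = ℂ`, the five closed unit balls centred at the
fifth roots of unity have multiplicity `5` (the origin lies in all of them),
no ball contains the centre of another one, hence no proper subfamily covers all
five centres; consequently the Nagata dimension of the plane is at least `4`
(on every scale). -/
theorem roots_of_unity_balls_nagata :
    (∀ k : Fin 5, (0 : ℂ) ∈ closedBall (Complex.exp (2 * Real.pi * I * ((k : ℕ) + 1) / 5)) 1) ∧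
    (∀ k l : Fin 5, k ≠ l →
      Complex.exp (2 * Real.pi * I * ((k : ℕ) + 1) / 5) ∉
        closedBall (Complex.exp (2 * Real.pi * I * ((l : ℕ) + 1) / 5)) 1) ∧
    (∀ S : Finset (Fin 5),
      (∀ k : Fin 5, ∃ l ∈ S,
        Complex.exp (2 * Real.pi * I * ((k : ℕ) + 1) / 5) ∈
          closedBall (Complex.exp (2 * Real.pi * I * ((l : ℕ) + 1) / 5)) 1) →
      S = Finset.univ) ∧
    (∀ s : ℝ≥0∞, 0 < s → ¬ NagataDimLE ℂ 3 s) := by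
  have hsep : ∀ k l : Fin 5, k ≠ l → fifthRoot k ∉ closedBall (fifthRoot l) 1 :=
    fun k l h => (one_lt_dist_fifthRoot h).not_ge
  refine ⟨fun k => ?_, hsep, fun S hS => ?_, fun s hs => ?_⟩
  · exact mem_closedBall.2 ((dist_zero_left _).trans (norm_fifthRoot k)).le
  · refine Finset.eq_univ_of_forall fun k => ?_
    obtain ⟨l, hl, hkl⟩ := hS k
    obtain rfl : k = l := by_contra fun h => hsep k l h hkl
    exact hl
  · obtain ⟨r, -, hr0, hrs⟩ := ENNReal.lt_iff_exists_real_btwn.1 hs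
    have hr : 0 < r := ENNReal.ofReal_pos.1 hr0
    refine not_nagataDimLE_of_pairwise_lt_dist (fun k => r • fifthRoot k) hr.le hrs 0
      (fun k => ?_) (fun k l h => ?_) (by simp)
    · rw [dist_zero_left, norm_smul, norm_fifthRoot, mul_one, Real.norm_of_nonneg hr.le]
    · show r < dist _ _
      rw [dist_smul₀, Real.norm_of_nonneg hr.le]
      exact lt_mul_of_one_lt_right hr (one_lt_dist_fifthRoot h)
end

section
/- Stone's geometric lemma without ties: let Ω be a metric space of Nagata dimension ≤ δ on scale s, let x, x₁,…,x_n be points such that all pairwise distances among these n+1 points are distinct, and let k be such that the k-NN radius r_{k}(x_i) within the sample (x, x₁,…,x_{i−1}, x_{i+1},…,x_n, with x replacing x_i) is < s for each i. Then the number of indices i with x_i ≠ x such that x is among the k nearest neighbours of x_i in that sample is at most (k+1)(δ+1). -/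
/-!
Apply the Nagata covering property to the balls around the points `xᵢ` that are counted, each
of radius its `k`-NN radius. Every such ball contains `x`, so the selected subfamily, having
multiplicity `≤ δ + 1` at `x`, consists of at most `δ + 1` balls. It still covers all the
centres, and in the absence of ties each ball contains at most `k + 1` of the points `xⱼ`.
-/

open Metric ENNReal Finset
open scoped Classical

/-- The number of points of the modified sample `x₁, …, x_{i-1}, x, x_{i+1}, …, xₙ`
lying in the closed ball of radius `r` around `xᵢ`. -/
noncomputable def sampleCount {Ω : Type*} [MetricSpace Ω] {n : ℕ} (x : Ω) (xs : Fin n → Ω)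
    (i : Fin n) (r : ℝ) : ℕ :=
  ((univ.erase i).filter fun j => dist (xs j) (xs i) ≤ r).card +
    (if dist x (xs i) ≤ r then 1 else 0)

/-- The `k`-NN radius of `xᵢ` within the modified sample: the smallest `r ≥ 0`
such that the closed ball of radius `r` around `xᵢ` contains at least `k` points
of the sample. -/
noncomputable def kNNRadius {Ω : Type*} [MetricSpace Ω] {n : ℕ} (k : ℕ) (x : Ω)
    (xs : Fin n → Ω) (i : Fin n) : ℝ :=
  sInf {r : ℝ | 0 ≤ r ∧ k ≤ sampleCount x xs i r}

noncomputable def kthRadius {ι : Type*} (I : Finset ι) (d : ι → ℝ) (k : ℕ) : ℝ :=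
  sInf {r : ℝ | 0 ≤ r ∧ k ≤ #(I.filter fun j => d j ≤ r)}

section kthRadius

variable {ι : Type*} {I : Finset ι} {d : ι → ℝ} {k : ℕ}

theorem kthRadius_nonneg : 0 ≤ kthRadius I d k :=
  Real.sInf_nonneg fun _ hr => hr.1

theorem kthRadius_set_nonempty (hd : ∀ j ∈ I, 0 ≤ d j) (hkI : k ≤ #I) :
    {r : ℝ | 0 ≤ r ∧ k ≤ #(I.filter fun j => d j ≤ r)}.Nonempty := by
  refine ⟨∑ j ∈ I, d j, sum_nonneg hd, ?_⟩
  rwa [filter_true_of_mem fun j hj => single_le_sum hd hj]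

theorem le_kthRadius {a : ℝ} (hd : ∀ j ∈ I, 0 ≤ d j) (hkI : k ≤ #I)
    (ha : #(I.filter fun j => d j < a) < k) : a ≤ kthRadius I d k := by
  refine le_csInf (kthRadius_set_nonempty hd hkI) fun r ⟨_, hr⟩ => ?_
  by_contra! hra
  have : #(I.filter fun j => d j ≤ r) ≤ #(I.filter fun j => d j < a) :=
    card_le_card fun j hj =>
      mem_filter.mpr ⟨(mem_filter.mp hj).1, (mem_filter.mp hj).2.trans_lt hra⟩
  omega

/-- Without ties the counting function jumps by at most one, so it is still `≤ k` at the
infimum: otherwise the second largest value `≤` the infimum would be admissible and smaller. -/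
theorem card_filter_le_kthRadius_le (hd : ∀ j ∈ I, 0 ≤ d j) (hinj : Set.InjOn d I)
    (hk : 1 ≤ k) : #(I.filter fun j => d j ≤ kthRadius I d k) ≤ k := by
  set F := I.filter fun j => d j ≤ kthRadius I d k
  by_contra! hF
  obtain ⟨j₂, hj₂, hmax₂⟩ := F.exists_max_image d (card_pos.mp (by omega))
  have hcard : k ≤ #(F.erase j₂) := by rw [card_erase_of_mem hj₂]; omega
  obtain ⟨j₁, hj₁, hmax₁⟩ := (F.erase j₂).exists_max_image d (card_pos.mp (by omega))
  obtain ⟨hne, hj₁F⟩ := mem_erase.mp hj₁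
  have hj₁I : j₁ ∈ I := (mem_filter.mp hj₁F).1
  have hlt : d j₁ < d j₂ :=
    (hmax₂ j₁ hj₁F).lt_of_ne fun h => hne (hinj hj₁I (mem_filter.mp hj₂).1 h)
  have hle : kthRadius I d k ≤ d j₁ := by
    refine csInf_le ⟨0, fun _ hr => hr.1⟩ ⟨hd j₁ hj₁I, hcard.trans (card_le_card ?_)⟩
    intro j hj
    exact mem_filter.mpr ⟨(mem_filter.mp (mem_of_mem_erase hj)).1, hmax₁ j hj⟩
  linarith [(mem_filter.mp hj₂).2]

end kthRadius

theorem injOn_dist_of_no_ties {ι Ω : Type*} [Fintype ι] [DecidableEq ι] [MetricSpace Ω]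
    {y : ι → Ω}
    (hties : ∀ i j k l : ι, i ≠ j → k ≠ l →
      dist (y i) (y j) = dist (y k) (y l) → ({i, j} : Finset ι) = {k, l})
    (c : ι) : Set.InjOn (fun j => dist (y j) (y c)) (univ.erase c : Finset ι) := by
  intro j hj j' hj' h
  have hpair := hties j c j' c (ne_of_mem_erase hj) (ne_of_mem_erase hj') h
  have : j ∈ ({j', c} : Finset ι) := hpair ▸ mem_insert_self j {c}
  simpa [ne_of_mem_erase hj] using this

theorem Fin.card_filter_erase_succ_cons {α : Type*} {n : ℕ} (P : α → Prop) [DecidablePred P]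
    (a : α) (f : Fin n → α) (i : Fin n) :
    #((univ.erase i.succ).filter fun j => P ((Fin.cons a f : Fin (n + 1) → α) j)) =
      #((univ.erase i).filter fun j => P (f j)) + if P a then 1 else 0 := by
  simp only [← filter_ne', filter_filter, Fin.card_filter_univ_succ', Fin.cons_zero,
    Fin.cons_succ, ne_eq, (Fin.succ_ne_zero i).symm, not_false_eq_true, true_and, Fin.succ_inj,
    add_comm]

section kNN

variable {Ω : Type*} [MetricSpace Ω] {n k : ℕ} {x : Ω} {xs : Fin n → Ω}

theorem sampleCount_eq (i : Fin n) (r : ℝ) : sampleCount x xs i r =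
    #((univ.erase i.succ).filter fun j => dist ((Fin.cons x xs : Fin (n + 1) → Ω) j) (xs i) ≤ r) :=
  (Fin.card_filter_erase_succ_cons (fun p => dist p (xs i) ≤ r) x xs i).symm

theorem kNNRadius_eq_kthRadius (i : Fin n) : kNNRadius k x xs i =
    kthRadius (univ.erase i.succ) (fun j => dist ((Fin.cons x xs : Fin (n + 1) → Ω) j) (xs i)) k :=
  by simp only [kNNRadius, kthRadius, sampleCount_eq]

theorem dist_le_kNNRadius (hkn : k ≤ n) {i : Fin n}
    (hi : #((univ.erase i).filter fun j => dist (xs j) (xs i) < dist x (xs i)) < k) :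
    dist x (xs i) ≤ kNNRadius k x xs i := by
  rw [kNNRadius_eq_kthRadius]
  refine le_kthRadius (fun _ _ => dist_nonneg) (by simpa using hkn) ?_
  rwa [Fin.card_filter_erase_succ_cons (fun p => dist p (xs i) < dist x (xs i)),
    if_neg (lt_irrefl _), add_zero]

theorem card_filter_dist_le_kNNRadius_le (hk : 1 ≤ k) {i : Fin n}
    (hinj : Set.InjOn (fun j => dist ((Fin.cons x xs : Fin (n + 1) → Ω) j) (xs i))
      (univ.erase i.succ : Finset (Fin (n + 1)))) :
    #(univ.filter fun j => dist (xs j) (xs i) ≤ kNNRadius k x xs i) ≤ k + 1 := by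
  have hcount : sampleCount x xs i (kNNRadius k x xs i) ≤ k := by
    rw [sampleCount_eq, kNNRadius_eq_kthRadius]
    exact card_filter_le_kthRadius_le (fun _ _ => dist_nonneg) hinj hk
  have herase := pred_card_le_card_erase (s := univ.filter fun j => dist (xs j) (xs i) ≤
    kNNRadius k x xs i) (a := i)
  rw [← filter_erase] at herase
  unfold sampleCount at hcount
  omega

end kNN

theorem card_le_of_nagataDimLE {Ω ι : Type*} [MetricSpace Ω] {δ m : ℕ} {s : ℝ≥0∞}
    (hdim : NagataDimLE Ω δ s) (S : Finset ι) (c : ι → Ω) (ρ : ι → ℝ)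
    (hρ : ∀ i ∈ S, 0 ≤ ρ i ∧ ENNReal.ofReal (ρ i) < s) (z : Ω)
    (hz : ∀ i ∈ S, dist z (c i) ≤ ρ i)
    (hball : ∀ i ∈ S, #(S.filter fun j => dist (c j) (c i) ≤ ρ i) ≤ m) :
    #S ≤ m * (δ + 1) := by
  obtain ⟨γ, hγ, hmult, hcover⟩ := hdim (S.image fun i => (c i, ρ i)) (by simpa using hρ)
  have hγcard : #γ ≤ δ + 1 := by
    have hz' := hmult z
    rwa [filter_true_of_mem] at hz'
    intro p hp
    obtain ⟨i, hi, rfl⟩ := mem_image.mp (hγ hp)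
    exact hz i hi
  calc #S ≤ #(γ.biUnion fun q => S.filter fun j => dist (c j) q.1 ≤ q.2) := by
        refine card_le_card fun i hi => ?_
        obtain ⟨q, hq, hiq⟩ := hcover _ (mem_image_of_mem _ hi)
        exact mem_biUnion.mpr ⟨q, hq, mem_filter.mpr ⟨hi, hiq⟩⟩
    _ ≤ ∑ q ∈ γ, #(S.filter fun j => dist (c j) q.1 ≤ q.2) := card_biUnion_le
    _ ≤ ∑ _q ∈ γ, m := sum_le_sum fun q hq => by
        obtain ⟨i, hi, rfl⟩ := mem_image.mp (hγ hq)
        exact hball i hi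
    _ = #γ * m := by rw [sum_const, smul_eq_mul]
    _ ≤ m * (δ + 1) := by rw [mul_comm]; exact Nat.mul_le_mul_left _ hγcard

/-- Stone's geometric lemma for metric spaces of finite Nagata dimension, in the
absence of distance ties: if `Ω` has Nagata dimension `≤ δ` on the scale `s`, all
pairwise distances among `x, x₁, …, xₙ` are distinct, and for each `i` the `k`-NN
radius of `xᵢ` within the sample `x₁, …, x_{i-1}, x, x_{i+1}, …, xₙ` is `< s`,
then the number of indices `i` with `xᵢ ≠ x` such that `x` is among the `k`
nearest neighbours of `xᵢ` in that sample is at most `(k + 1) * (δ + 1)`. -/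
theorem stone_geometric_lemma_no_ties {Ω : Type*} [MetricSpace Ω] (δ : ℕ) (s : ℝ≥0∞)
    (hdim : NagataDimLE Ω δ s) (n k : ℕ) (x : Ω) (xs : Fin n → Ω)
    (y : Fin (n + 1) → Ω) (hy : y = Fin.cons x xs)
    (hties : ∀ i j k' l : Fin (n + 1), i ≠ j → k' ≠ l →
      dist (y i) (y j) = dist (y k') (y l) →
      ({i, j} : Finset (Fin (n + 1))) = {k', l})
    (hrad : ∀ i : Fin n, ENNReal.ofReal (kNNRadius k x xs i) < s) :
    (univ.filter fun i : Fin n =>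
        xs i ≠ x ∧
          ((univ.erase i).filter fun j => dist (xs j) (xs i) < dist x (xs i)).card < k).card
      ≤ (k + 1) * (δ + 1) := by
  subst hy
  set S := univ.filter fun i : Fin n =>
    xs i ≠ x ∧ ((univ.erase i).filter fun j => dist (xs j) (xs i) < dist x (xs i)).card < k
  obtain rfl | hk := Nat.eq_zero_or_pos k
  · simp [S]
  obtain hnk | hkn := lt_or_ge n k
  · calc #S ≤ n := (card_filter_le _ _).trans_eq (card_fin n)
      _ ≤ (k + 1) * (δ + 1) := by nlinarith
  refine card_le_of_nagataDimLE hdim S xs (kNNRadius k x xs)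
    (fun i _ => ⟨by rw [kNNRadius_eq_kthRadius]; exact kthRadius_nonneg, hrad i⟩) x
    (fun i hi => dist_le_kNNRadius hkn (mem_filter.mp hi).2.2) fun i _ => ?_
  have hinj := injOn_dist_of_no_ties (y := (Fin.cons x xs : Fin (n + 1) → Ω)) hties i.succ
  rw [Fin.cons_succ] at hinj
  exact (card_le_card (filter_subset_filter _ (subset_univ S))).trans
    (card_filter_dist_le_kNNRadius_le hk hinj)
end

section
/- There exists a countable metric space {x₁, x₂, …} of Nagata dimension 0 on scale +∞ (in fact an ultrametric space), defined by d(x_i, x_j) = Σ_{m=1}^{max(i,j)} α^m for i ≠ j and some fixed 0 < α, such that for every N there is n with Σ_{i=2}^{n} 1/i ≥ N, where 1/i is the probability that x₁ is the (uniformly tie-broken) nearest neighbour of x_i within {x₁,…,x_n} \ {x_i}. In particular, the expected number of sample points having x₁ as nearest neighbour under uniform tie-breaking is Σ_{i=2}^{n} 1/i, which is unbounded in n. -/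
/-!
The distance between two distinct points depends only on the larger index, through a
nondecreasing function of it. In a triangle the two sides at the point of largest index are
therefore equal and at least as long as the third, which is the ultrametric inequality, and
`xᵢ` sees all of `x₁, …, x_{i-1}` at the same distance. The divergence of the harmonic series
does the rest.
-/

open Finset

/-- The distance on the countable set `{x₁, x₂, …}` (indexed by `ℕ`):
`d(xᵢ, xⱼ) = Σ_{m=1}^{max i j} α^m` for `i ≠ j`, and `0` on the diagonal. -/
noncomputable def D (α : ℝ) (i j : ℕ) : ℝ :=
  if i = j then 0 else ∑ m ∈ Finset.Icc 1 (max i j), α ^ m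

open Filter

def maxDist (f : ℕ → ℝ) (i j : ℕ) : ℝ :=
  if i = j then 0 else f (max i j)

namespace maxDist

variable {f : ℕ → ℝ}

theorem comm (f : ℕ → ℝ) (i j : ℕ) : maxDist f i j = maxDist f j i := by
  unfold maxDist
  rw [max_comm]
  split_ifs <;> first | rfl | omega

theorem of_lt {i j : ℕ} (h : j < i) : maxDist f i j = f i := by
  rw [maxDist, if_neg h.ne', max_eq_left h.le]

theorem nonneg (hf : 0 ≤ f) (i j : ℕ) : 0 ≤ maxDist f i j := by
  unfold maxDist
  split_ifs
  exacts [le_rfl, hf _]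

theorem eq_zero_iff (hf : ∀ n, 0 < n → f n ≠ 0) {i j : ℕ} : maxDist f i j = 0 ↔ i = j := by
  unfold maxDist
  split_ifs with hij
  · exact iff_of_true rfl hij
  · exact iff_of_false (hf _ (by omega)) hij

theorem le_max (hf : Monotone f) (hf₀ : 0 ≤ f) (i j k : ℕ) :
    maxDist f i k ≤ max (maxDist f i j) (maxDist f j k) := by
  rcases eq_or_ne i k with rfl | hik
  · simp only [maxDist]
    exact le_max_of_le_left (nonneg hf₀ i j)
  rcases eq_or_ne j i with rfl | hji
  · exact le_max_right _ _
  rcases eq_or_ne j k with rfl | hjk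
  · exact le_max_left _ _
  simp only [maxDist, if_neg hik, if_neg hji.symm, if_neg hjk]
  rcases le_total (max i j) (max j k) with h | h
  · exact le_max_of_le_right (hf (max_le ((le_max_left i j).trans h) (le_max_right j k)))
  · exact le_max_of_le_left (hf (max_le (le_max_left i j) ((le_max_right j k).trans h)))

end maxDist

theorem D_eq_maxDist (α : ℝ) : D α = maxDist fun n ↦ ∑ m ∈ Icc 1 n, α ^ m := rfl

section PowSum

variable {α : ℝ}

theorem monotone_sum_Icc_pow (hα : 0 ≤ α) : Monotone fun n ↦ ∑ m ∈ Icc 1 n, α ^ m :=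
  fun _ _ h ↦ sum_le_sum_of_subset_of_nonneg (Icc_subset_Icc le_rfl h)
    fun _ _ _ ↦ pow_nonneg hα _

theorem sum_Icc_pow_nonneg (hα : 0 ≤ α) : 0 ≤ fun n ↦ ∑ m ∈ Icc 1 n, α ^ m :=
  fun _ ↦ sum_nonneg fun _ _ ↦ pow_nonneg hα _

theorem sum_Icc_pow_pos (hα : 0 < α) {n : ℕ} (hn : 0 < n) : 0 < ∑ m ∈ Icc 1 n, α ^ m :=
  sum_pos (fun _ _ ↦ pow_pos hα _) ⟨1, mem_Icc.mpr ⟨le_rfl, hn⟩⟩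

end PowSum

theorem sum_range_one_div_succ_eq_one_add_sum_Icc_two (n : ℕ) :
    ∑ i ∈ range (n + 1), (1 : ℝ) / (i + 1) = 1 + ∑ i ∈ Icc 2 (n + 1), (1 : ℝ) / i := by
  induction n with
  | zero => simp
  | succ n ih =>
    rw [sum_range_succ, ih, sum_Icc_succ_top (b := n + 1) (by omega)]
    push_cast
    ring

theorem tendsto_sum_Icc_two_one_div_atTop :
    Tendsto (fun n : ℕ ↦ ∑ i ∈ Icc 2 n, (1 : ℝ) / i) atTop atTop := by
  rw [← tendsto_add_atTop_iff_nat 1]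
  have harmonic := Real.tendsto_sum_range_one_div_nat_succ_atTop.comp (tendsto_add_atTop_nat 1)
  refine (tendsto_atTop_add_const_right _ (-1) harmonic).congr fun n ↦ ?_
  simp only [Function.comp_apply, sum_range_one_div_succ_eq_one_add_sum_Icc_two]
  ring

/-- There is a countable metric space `{x₁, x₂, …}` whose metric `D α` is an
ultrametric (hence of Nagata dimension `0` on the scale `+∞`), in which all points
`x₁, …, x_{i-1}` are equidistant from `xᵢ` (so each is the uniformly tie-broken
nearest neighbour of `xᵢ` with probability `1/(i-1)`), while for every `N` there is
`n` with `Σ_{i=2}^{n} 1/i ≥ N`: the expected number of sample points having `x₁`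
as nearest neighbour is unbounded in `n`. -/
theorem hub_example (α : ℝ) (hα : 0 < α) :
    (∀ i j k : ℕ, D α i k ≤ max (D α i j) (D α j k)) ∧
    (∀ i j : ℕ, D α i j = D α j i) ∧
    (∀ i j : ℕ, D α i j = 0 ↔ i = j) ∧
    (∀ i j j' : ℕ, 1 ≤ j → j < i → 1 ≤ j' → j' < i → D α i j = D α i j') ∧
    (∀ N : ℝ, ∃ n : ℕ, N ≤ ∑ i ∈ Finset.Icc 2 n, (1 : ℝ) / i) := by
  rw [D_eq_maxDist]
  refine ⟨maxDist.le_max (monotone_sum_Icc_pow hα.le) (sum_Icc_pow_nonneg hα.le),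
    maxDist.comm _,
    fun i j ↦ maxDist.eq_zero_iff (fun _ hn ↦ (sum_Icc_pow_pos hα hn).ne'),
    fun i j j' _ hj _ hj' ↦ by rw [maxDist.of_lt hj, maxDist.of_lt hj'],
    fun N ↦ (tendsto_sum_Icc_two_one_div_atTop.eventually_ge_atTop N).exists⟩
end

section
/- There exist a metric space Ω of Nagata dimension 0 (an ultrametric space) and constants 0 < β < α < 1 with β < 1/2, such that in the ℓ¹-type direct sum Ω ⊕₁ [0,1] the points z = (x₀, 0) and z_i = (x_i, β^i), i ≥ 1, satisfy d(z_i, z_j) > max{d(z_i, z), d(z_j, z)} for all i ≠ j; consequently the Nagata dimension of Ω ⊕₁ [0,1] is infinite on every scale, even though dim_Nagata(Ω) = 0 and dim_Nagata([0,1]) = 1. -/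
open Metric ENNReal

/-!
Let `Ω` carry the ultrametric `d(a, b) = max (w a) (w b)` on `ℕ × ℕ`, whose `k`-th ray is a copy of
the paper's space rescaled by `2⁻ᵏ`. In `Ω ⊕₁ [0,1]`, lift the `i`-th point of a ray to the height
`2⁻ᵏ 4⁻ⁱ` and its base point to height `0`. Two lifted points are farther apart than either is from
the base: the ultrametric term jumps to the larger weight, while the height difference exceeds the
smaller height. Such a fan of `δ + 2` points inside a small ball rules out Nagata dimension `≤ δ`
on that scale. Conversely, a separated family of balls through one point has at most one member in
an ultrametric space and at most one centre on each side of the point in `[0,1]`.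
-/

section Selection

variable {X : Type*} [MetricSpace X]

def IsSeparatedFamily (γ : Finset (X × ℝ)) : Prop :=
  ∀ p ∈ γ, ∀ q ∈ γ, p ≠ q → max p.2 q.2 < dist p.1 q.1

/-- Balls are added by decreasing radius; a ball is kept iff its centre is not yet covered. -/
lemma exists_separated_subfamily (γ : Finset (X × ℝ)) (hγ : ∀ p ∈ γ, 0 ≤ p.2) :
    ∃ γ' ⊆ γ, IsSeparatedFamily γ' ∧ ∀ p ∈ γ, ∃ q ∈ γ', dist p.1 q.1 ≤ q.2 := by
  classical
  induction γ using Finset.induction_on_min_value (fun p : X × ℝ => p.2) with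
  | empty => exact ⟨∅, subset_rfl, by simp [IsSeparatedFamily], by simp⟩
  | insert a γ _ ha_min ih =>
    rw [Finset.forall_mem_insert] at hγ
    obtain ⟨γ', hsub, hsep, hcov⟩ := ih hγ.2
    by_cases hcovered : ∃ q ∈ γ', dist a.1 q.1 ≤ q.2
    · exact ⟨γ', hsub.trans (Finset.subset_insert _ _), hsep,
        (Finset.forall_mem_insert _ _ _).2 ⟨hcovered, hcov⟩⟩
    push Not at hcovered
    have hfar : ∀ q ∈ γ', max a.2 q.2 < dist a.1 q.1 := fun q hq => by
      rw [max_eq_right (ha_min q (hsub hq))]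
      exact hcovered q hq
    refine ⟨insert a γ', Finset.insert_subset_insert _ hsub, ?_, ?_⟩
    · intro p hp q hq hpq
      rcases Finset.mem_insert.1 hp with hpa | hp <;>
        rcases Finset.mem_insert.1 hq with hqa | hq
      · exact absurd (hpa.trans hqa.symm) hpq
      · rw [hpa]; exact hfar q hq
      · rw [hqa, max_comm, dist_comm]; exact hfar p hp
      · exact hsep p hp q hq hpq
    · refine (Finset.forall_mem_insert _ _ _).2
        ⟨⟨a, Finset.mem_insert_self _ _, by simpa using hγ.1⟩, fun p hp => ?_⟩
      obtain ⟨q, hq, hpq⟩ := hcov p hp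
      exact ⟨q, Finset.mem_insert_of_mem hq, hpq⟩

lemma nagataDimLE_top_of_separated {δ : ℕ}
    (h : ∀ γ : Finset (X × ℝ), IsSeparatedFamily γ → BallMultLE γ (δ + 1)) :
    NagataDimLE X δ ⊤ := fun γ hγ => by
  obtain ⟨γ', hsub, hsep, hcov⟩ := exists_separated_subfamily γ fun p hp => (hγ p hp).1
  exact ⟨γ', hsub, h γ' hsep, hcov⟩

lemma IsSeparatedFamily.card_le_one {γ T : Finset (X × ℝ)} (hγ : IsSeparatedFamily γ)
    (hT : T ⊆ γ) (h : ∀ p ∈ T, ∀ q ∈ T, dist p.1 q.1 ≤ max p.2 q.2) : T.card ≤ 1 :=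
  Finset.card_le_one.2 fun p hp q hq => by_contra fun hpq =>
    (hγ p (hT hp) q (hT hq) hpq).not_ge (h p hp q hq)

lemma nagataDimLE_zero_of_isUltrametricDist [IsUltrametricDist X] : NagataDimLE X 0 ⊤ :=
  nagataDimLE_top_of_separated fun _ hsep y => hsep.card_le_one (Finset.filter_subset _ _)
    fun p hp q hq => (dist_triangle_max p.1 y q.1).trans <|
      max_le_max ((dist_comm _ _).trans_le (Finset.mem_filter.1 hp).2) (Finset.mem_filter.1 hq).2

end Selection

lemma abs_sub_le_max_of_sameSide {a b y ra rb : ℝ} (hside : a ≤ y ∧ b ≤ y ∨ y ≤ a ∧ y ≤ b)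
    (ha : |y - a| ≤ ra) (hb : |y - b| ≤ rb) : |a - b| ≤ max ra rb := by
  rw [abs_le] at ha hb ⊢
  rcases hside with ⟨hay, hby⟩ | ⟨hay, hby⟩ <;> constructor <;>
    linarith [le_max_left ra rb, le_max_right ra rb]

/-- Of the balls of a separated family that contain `y`, at most one has its centre on each side
of `y`. -/
lemma unitInterval.nagataDimLE_one : NagataDimLE unitInterval 1 ⊤ := by
  classical
  refine nagataDimLE_top_of_separated fun γ hsep y => ?_
  set S := γ.filter fun p => dist y p.1 ≤ p.2
  have hside : ∀ T ⊆ S, (∀ p ∈ T, ∀ q ∈ T, p.1 ≤ y ∧ q.1 ≤ y ∨ y ≤ p.1 ∧ y ≤ q.1) →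
      T.card ≤ 1 := fun T hT h =>
    hsep.card_le_one (hT.trans (Finset.filter_subset _ _)) fun p hp q hq =>
      abs_sub_le_max_of_sameSide (h p hp q hq) (Finset.mem_filter.1 (hT hp)).2
        (Finset.mem_filter.1 (hT hq)).2
  have hleft := hside (S.filter fun p => p.1 ≤ y) (Finset.filter_subset _ _) fun p hp q hq =>
    Or.inl ⟨(Finset.mem_filter.1 hp).2, (Finset.mem_filter.1 hq).2⟩
  have hright := hside (S.filter fun p => ¬ p.1 ≤ y) (Finset.filter_subset _ _) fun p hp q hq =>
    Or.inr ⟨(not_le.1 (Finset.mem_filter.1 hp).2).le, (not_le.1 (Finset.mem_filter.1 hq).2).le⟩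
  have := S.card_filter_add_card_filter_not fun p => p.1 ≤ y
  omega

/-- The balls `B(f i, d(f i, z))` must all be kept by any subcover, and they all contain `z`. -/
lemma not_nagataDimLE_of_fan {X ι : Type*} [MetricSpace X] [Fintype ι] {δ : ℕ} {s : ℝ≥0∞}
    (hcard : δ + 1 < Fintype.card ι) (z : X) (f : ι → X)
    (hscale : ∀ i, ENNReal.ofReal (dist (f i) z) < s)
    (hfan : ∀ i j, i ≠ j → max (dist (f i) z) (dist (f j) z) < dist (f i) (f j)) :
    ¬ NagataDimLE X δ s := by
  classical
  intro hX
  set ball : ι → X × ℝ := fun i => (f i, dist (f i) z)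
  have hball : Function.Injective ball := fun i j hij => by_contra fun hne => by
    have := hfan i j hne
    simp only [ball, Prod.mk.injEq] at hij
    rw [hij.1, dist_self] at this
    exact (lt_of_le_of_lt (le_max_left _ _) this).not_ge dist_nonneg
  obtain ⟨γ', hsub, hmult, hcov⟩ := hX (Finset.univ.image ball) (by
    simp only [Finset.mem_image, Finset.mem_univ, true_and, forall_exists_index,
      forall_apply_eq_imp_iff]
    exact fun i => ⟨dist_nonneg, hscale i⟩)
  have hkept : ∀ i, ball i ∈ γ' := fun i => by
    obtain ⟨q, hq, hiq⟩ := hcov (ball i) (Finset.mem_image_of_mem _ (Finset.mem_univ i))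
    obtain ⟨j, -, rfl⟩ := Finset.mem_image.1 (hsub hq)
    obtain rfl | hij := eq_or_ne i j
    · exact hq
    · exact absurd hiq (not_le.2 ((le_max_right _ _).trans_lt (hfan i j hij)))
  have hz : Finset.univ.image ball ⊆ γ'.filter fun p => dist z p.1 ≤ p.2 := fun p hp => by
    obtain ⟨i, -, rfl⟩ := Finset.mem_image.1 hp
    exact Finset.mem_filter.2 ⟨hkept i, (dist_comm _ _).le⟩
  have := (Finset.card_le_card hz).trans (hmult z)
  rw [Finset.card_image_of_injective _ hball, Finset.card_univ] at this
  omega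

lemma exists_pos_ofReal_lt {s : ℝ≥0∞} (hs : 0 < s) : ∃ r : ℝ, 0 < r ∧ ENNReal.ofReal r < s := by
  obtain ⟨r, -, hr0, hrs⟩ := ENNReal.lt_iff_exists_real_btwn.1 hs
  exact ⟨r, ENNReal.ofReal_pos.1 hr0, hrs⟩

/-- The points `0` and `2ε` form a fan around `ε`. -/
lemma unitInterval.not_nagataDimLE_zero {s : ℝ≥0∞} (hs : 0 < s) :
    ¬ NagataDimLE unitInterval 0 s := by
  obtain ⟨r, hr, hrs⟩ := exists_pos_ofReal_lt hs
  set ε := min r (1 / 2)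
  have hε : 0 < ε := lt_min hr one_half_pos
  have hεr : ENNReal.ofReal ε < s := (ENNReal.ofReal_le_ofReal (min_le_left _ _)).trans_lt hrs
  have hε1 : 2 * ε ≤ 1 := by linarith [min_le_right r (1 / 2)]
  let c : unitInterval := ⟨ε, by constructor <;> linarith⟩
  let f : Bool → unitInterval := fun b => if b then ⟨2 * ε, by constructor <;> linarith⟩ else 0
  have hdist : ∀ b, dist (f b) c = ε := fun b => by
    cases b <;> simp [f, c, Subtype.dist_eq, Real.dist_eq, abs_of_pos hε, two_mul]
  refine not_nagataDimLE_of_fan (by simp) c f (fun b => by rwa [hdist]) fun b b' hbb' => ?_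
  rw [hdist, hdist, max_self]
  cases b <;> cases b' <;> simp_all [f, Subtype.dist_eq, Real.dist_eq, abs_of_pos hε]

/-- `ℕ × ℕ` with the ultrametric `d(a, b) = max (w a) (w b)` for `a ≠ b`, where
`w (k, i) = 2⁻ᵏ (2 - 2⁻ⁱ)`. On the `k`-th ray `{(k, i)}` this is `2⁻ᵏ (1 + ∑_{m=1}^{max(i,j)} 2⁻ᵐ)`,
the paper's `Ω` with `α = 1/2` shifted by a constant and rescaled to the scale `2⁻ᵏ`. -/
def Omega : Type := ℕ × ℕ

namespace Omega

instance : DecidableEq Omega := inferInstanceAs (DecidableEq (ℕ × ℕ))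

noncomputable def weight (a : ℕ × ℕ) : ℝ := (1 / 2) ^ a.1 * (2 - (1 / 2) ^ a.2)

lemma weight_pos (a : ℕ × ℕ) : 0 < weight a := by
  have : (1 / 2 : ℝ) ^ a.2 ≤ 1 := pow_le_one₀ (by norm_num) (by norm_num)
  exact mul_pos (by positivity) (by linarith)

lemma weight_mono {k i j : ℕ} (h : i ≤ j) : weight (k, i) ≤ weight (k, j) :=
  mul_le_mul_of_nonneg_left (sub_le_sub_left (pow_le_pow_of_le_one (by norm_num) (by norm_num) h) _)
    (by positivity)

noncomputable def weightDist (a b : ℕ × ℕ) : ℝ := if a = b then 0 else max (weight a) (weight b)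

lemma weightDist_of_ne {a b : ℕ × ℕ} (h : a ≠ b) : weightDist a b = max (weight a) (weight b) :=
  if_neg h

lemma weightDist_nonneg (a b : ℕ × ℕ) : 0 ≤ weightDist a b := by
  unfold weightDist
  split_ifs
  exacts [le_rfl, (weight_pos a).le.trans (le_max_left _ _)]

lemma weight_le_max_weightDist {a c : ℕ × ℕ} (hac : a ≠ c) (b : ℕ × ℕ) :
    weight a ≤ max (weightDist a b) (weightDist b c) := by
  obtain rfl | hab := eq_or_ne a b
  · exact le_max_of_le_right ((le_max_left _ _).trans (weightDist_of_ne hac).ge)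
  · exact le_max_of_le_left ((le_max_left _ _).trans (weightDist_of_ne hab).ge)

lemma weightDist_comm (a b : ℕ × ℕ) : weightDist a b = weightDist b a := by
  obtain rfl | hab := eq_or_ne a b
  · rfl
  · rw [weightDist_of_ne hab, weightDist_of_ne hab.symm, max_comm]

lemma weightDist_triangle_max (a b c : ℕ × ℕ) :
    weightDist a c ≤ max (weightDist a b) (weightDist b c) := by
  obtain rfl | hac := eq_or_ne a c
  · simpa [weightDist] using le_max_of_le_left (weightDist_nonneg a b)
  rw [weightDist_of_ne hac]
  refine max_le (weight_le_max_weightDist hac b) ?_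
  rw [max_comm, weightDist_comm a, weightDist_comm b]
  exact weight_le_max_weightDist hac.symm b

noncomputable instance : MetricSpace Omega where
  dist := weightDist
  dist_self _ := if_pos rfl
  dist_comm := weightDist_comm
  dist_triangle a b c := (weightDist_triangle_max a b c).trans <|
    max_le_add_of_nonneg (weightDist_nonneg a b) (weightDist_nonneg b c)
  eq_of_dist_eq_zero {a b} h := by_contra fun hab => by
    have := (weight_pos a).trans_le ((le_max_left _ _).trans (weightDist_of_ne hab).ge)
    exact this.ne' h

instance : IsUltrametricDist Omega := ⟨weightDist_triangle_max⟩

lemma dist_of_ne {a b : Omega} (h : a ≠ b) : dist a b = max (weight a) (weight b) :=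
  weightDist_of_ne h

end Omega

lemma WithLp.dist_toLp_one_prod {α β : Type*} [PseudoMetricSpace α] [PseudoMetricSpace β]
    (x y : α × β) : dist (WithLp.toLp 1 x) (WithLp.toLp 1 y) = dist x.1 y.1 + dist x.2 y.2 := by
  rw [WithLp.prod_dist_eq_add (by simp)]
  simp

lemma one_quarter_pow_eq_sq (i : ℕ) : (1 / 4 : ℝ) ^ i = ((1 / 2) ^ i) ^ 2 := by
  rw [sq, ← mul_pow]
  norm_num

namespace Omega

noncomputable def fanHeight (k i : ℕ) : unitInterval :=
  ⟨(1 / 2) ^ k * (1 / 4) ^ i, unitInterval.mul_mem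
    ⟨by positivity, pow_le_one₀ (by norm_num) (by norm_num)⟩
    ⟨by positivity, pow_le_one₀ (by norm_num) (by norm_num)⟩⟩

noncomputable def fanCentre (k : ℕ) : WithLp 1 (Omega × unitInterval) :=
  WithLp.toLp 1 (((k, 0) : ℕ × ℕ), 0)

noncomputable def fanPoint (k i : ℕ) : WithLp 1 (Omega × unitInterval) :=
  WithLp.toLp 1 (((k, i) : ℕ × ℕ), fanHeight k i)

lemma dist_fanPoint_fanCentre (k : ℕ) {i : ℕ} (hi : 1 ≤ i) :
    dist (fanPoint k i) (fanCentre k) = weight (k, i) + (1 / 2) ^ k * (1 / 4) ^ i := by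
  rw [fanPoint, fanCentre, WithLp.dist_toLp_one_prod,
    dist_of_ne ((Prod.mk_right_injective k).ne (by omega : i ≠ 0)),
    max_eq_left (weight_mono (Nat.zero_le i))]
  simp only [fanHeight, Subtype.dist_eq, Real.dist_eq, Set.Icc.coe_zero, sub_zero]
  rw [abs_of_pos (by positivity)]

lemma dist_fanPoint_fanPoint (k : ℕ) {i j : ℕ} (hij : i < j) :
    dist (fanPoint k i) (fanPoint k j) =
      weight (k, j) + ((1 / 2) ^ k * (1 / 4) ^ i - (1 / 2) ^ k * (1 / 4) ^ j) := by
  rw [fanPoint, fanPoint, WithLp.dist_toLp_one_prod,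
    dist_of_ne ((Prod.mk_right_injective k).ne hij.ne), max_eq_right (weight_mono hij.le)]
  have : (1 / 4 : ℝ) ^ j ≤ (1 / 4) ^ i := pow_le_pow_of_le_one (by norm_num) (by norm_num) hij.le
  simp only [fanHeight, Subtype.dist_eq, Real.dist_eq]
  rw [abs_of_nonneg (sub_nonneg.2 (mul_le_mul_of_nonneg_left this (by positivity)))]

/-- With `u = 2⁻ⁱ`, `v = 2⁻ʲ` the claim reads `v + v² < u` and `2 v² < u²`, both clear from
`2 v ≤ u`. -/
lemma fanPoint_fan_of_lt (k : ℕ) {i j : ℕ} (hi : 1 ≤ i) (hij : i < j) :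
    max (dist (fanPoint k i) (fanCentre k)) (dist (fanPoint k j) (fanCentre k)) <
      dist (fanPoint k i) (fanPoint k j) := by
  rw [dist_fanPoint_fanCentre k hi, dist_fanPoint_fanCentre k (hi.trans hij.le),
    dist_fanPoint_fanPoint k hij, weight, weight, one_quarter_pow_eq_sq, one_quarter_pow_eq_sq]
  dsimp only
  set c : ℝ := (1 / 2) ^ k
  set u : ℝ := (1 / 2) ^ i
  set v : ℝ := (1 / 2) ^ j
  have hc : 0 < c := by positivity
  have hv : 0 < v := by positivity
  have hv1 : v < 1 := pow_lt_one₀ (by norm_num) (by norm_num) (by omega)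
  have hvu : 2 * v ≤ u := by
    have : v ≤ (1 / 2) ^ (i + 1) := pow_le_pow_of_le_one (by norm_num) (by norm_num) hij
    rw [pow_succ] at this
    linarith
  refine max_lt ?_ ?_
  · nlinarith [mul_lt_mul_of_pos_left (mul_lt_of_lt_one_left hv hv1) hc]
  · have : 4 * v ^ 2 ≤ u ^ 2 := by nlinarith
    nlinarith [mul_pos hc (pow_pos hv 2)]

lemma fanPoint_fan (k : ℕ) {i j : ℕ} (hi : 1 ≤ i) (hj : 1 ≤ j) (hij : i ≠ j) :
    max (dist (fanPoint k i) (fanCentre k)) (dist (fanPoint k j) (fanCentre k)) <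
      dist (fanPoint k i) (fanPoint k j) := by
  rcases hij.lt_or_gt with hij | hji
  · exact fanPoint_fan_of_lt k hi hij
  · rw [max_comm, dist_comm (fanPoint k i) (fanPoint k j)]
    exact fanPoint_fan_of_lt k hj hji

lemma dist_fanPoint_fanCentre_le (k : ℕ) {i : ℕ} (hi : 1 ≤ i) :
    dist (fanPoint k i) (fanCentre k) ≤ 2 * (1 / 2) ^ k := by
  rw [dist_fanPoint_fanCentre k hi, weight, one_quarter_pow_eq_sq]
  dsimp only
  have hu : ((1 / 2 : ℝ) ^ i) ^ 2 ≤ (1 / 2) ^ i :=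
    pow_le_of_le_one (by positivity) (pow_le_one₀ (by norm_num) (by norm_num)) two_ne_zero
  nlinarith [pow_pos (by norm_num : (0 : ℝ) < 1 / 2) k]

theorem not_nagataDimLE_withLp_one {δ : ℕ} {s : ℝ≥0∞} (hs : 0 < s) :
    ¬ NagataDimLE (WithLp 1 (Omega × unitInterval)) δ s := by
  obtain ⟨r, hr, hrs⟩ := exists_pos_ofReal_lt hs
  obtain ⟨k, hk⟩ := exists_pow_lt_of_lt_one (half_pos hr) (by norm_num : (1 / 2 : ℝ) < 1)
  refine not_nagataDimLE_of_fan (ι := Fin (δ + 2)) (by simp) (fanCentre k)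
    (fun i => fanPoint k (i + 1)) (fun i => ?_) fun i j hij => fanPoint_fan k (by omega) (by omega)
      (by simpa [Fin.val_inj] using hij)
  refine (ENNReal.ofReal_le_ofReal ?_).trans_lt hrs
  linarith [dist_fanPoint_fanCentre_le k (Nat.le_add_left 1 i)]

end Omega

/-- There exist a metric space `Ω` of Nagata dimension `0` (an ultrametric space)
and constants `0 < β < α < 1`, `β < 1/2`, such that in the `ℓ¹`-type direct sum
`Ω ⊕₁ [0,1]` the points `z = (x₀, 0)` and `zᵢ = (xᵢ, βⁱ)`, `i ≥ 1`, satisfy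
`d(zᵢ, zⱼ) > max {d(zᵢ, z), d(zⱼ, z)}` for all `i ≠ j`; consequently the Nagata
dimension of `Ω ⊕₁ [0,1]` is infinite on every scale, even though
`dim_Nagata Ω = 0` and `dim_Nagata [0,1] = 1`. -/
theorem l1_sum_infinite_nagata_dim :
    ∃ (Ω : Type) (_inst : MetricSpace Ω),
      (∀ a b c : Ω, dist a c ≤ max (dist a b) (dist b c)) ∧
      NagataDimLE Ω 0 ⊤ ∧
      NagataDimLE unitInterval 1 ⊤ ∧
      (∀ s : ℝ≥0∞, 0 < s → ¬ NagataDimLE unitInterval 0 s) ∧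
      ∃ α β : ℝ, 0 < β ∧ β < α ∧ α < 1 ∧ β < 1 / 2 ∧
        ∃ (xx : ℕ → Ω) (t : ℕ → unitInterval) (t0 : unitInterval),
          (∀ i, (t i : ℝ) = β ^ i) ∧ ((t0 : ℝ) = 0) ∧
          (∀ i j : ℕ, 1 ≤ i → 1 ≤ j → i ≠ j →
            dist ((WithLp.equiv 1 (Ω × unitInterval)).symm (xx i, t i))
                ((WithLp.equiv 1 (Ω × unitInterval)).symm (xx j, t j)) >
              max
                (dist ((WithLp.equiv 1 (Ω × unitInterval)).symm (xx i, t i))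
                  ((WithLp.equiv 1 (Ω × unitInterval)).symm (xx 0, t0)))
                (dist ((WithLp.equiv 1 (Ω × unitInterval)).symm (xx j, t j))
                  ((WithLp.equiv 1 (Ω × unitInterval)).symm (xx 0, t0)))) ∧
          (∀ (δ : ℕ) (s : ℝ≥0∞), 0 < s →
            ¬ NagataDimLE (WithLp 1 (Ω × unitInterval)) δ s) := by
  refine ⟨Omega, inferInstance, dist_triangle_max, nagataDimLE_zero_of_isUltrametricDist,
    unitInterval.nagataDimLE_one, fun _ => unitInterval.not_nagataDimLE_zero,
    1 / 2, 1 / 4, by norm_num, by norm_num, by norm_num, by norm_num,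
    fun i => ((0, i) : ℕ × ℕ), Omega.fanHeight 0, 0, fun i => by simp [Omega.fanHeight], rfl,
    fun i j hi hj hij => Omega.fanPoint_fan 0 hi hj hij,
    fun _ _ => Omega.not_nagataDimLE_withLp_one⟩
end

section
/- A subspace X of a metric space Ω has Nagata dimension ≤ δ in Ω on scale s if and only if every finite disconnected family of closed balls in Ω of radii < s with centres in X has multiplicity ≤ δ+1. -/
open Metric ENNReal

/-- A family of closed balls is disconnected if the centre of each ball does not
belong to any other ball of the family. -/
def BallsDisconnected {Ω : Type*} [MetricSpace Ω] (γ : Finset (Ω × ℝ)) : Prop :=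
  ∀ p ∈ γ, ∀ q ∈ γ, p ≠ q → ¬ dist p.1 q.1 ≤ q.2

/-- A subspace `X` of `Ω` has Nagata dimension `≤ δ` in `Ω` on the scale `s`:
every finite family of closed balls in `Ω` with centres in `X` and radii `< s`
admits a subfamily of multiplicity `≤ δ + 1` covering all the centres. -/
def NagataDimOnLE {Ω : Type*} [MetricSpace Ω] (X : Set Ω) (δ : ℕ) (s : ℝ≥0∞) : Prop :=
  ∀ γ : Finset (Ω × ℝ), (∀ p ∈ γ, p.1 ∈ X ∧ 0 ≤ p.2 ∧ ENNReal.ofReal p.2 < s) →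
    ∃ γ' ⊆ γ, BallMultLE γ' (δ + 1) ∧ ∀ p ∈ γ, ∃ q ∈ γ', dist p.1 q.1 ≤ q.2

/-! A disconnected family cannot drop a ball and still cover its centres, while any family
of balls contains a disconnected subfamily covering its centres: pick a ball of largest
radius, discard every ball whose centre it contains, and recurse. The largest radius
guarantees that the chosen centre lies in none of the remaining balls. -/

section

variable {Ω : Type*} [MetricSpace Ω]

def CoversCentres (γ' γ : Finset (Ω × ℝ)) : Prop :=
  ∀ p ∈ γ, ∃ q ∈ γ', dist p.1 q.1 ≤ q.2

theorem BallsDisconnected.subset_of_coversCentres {γ γ' : Finset (Ω × ℝ)}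
    (hγ : BallsDisconnected γ) (hsub : γ' ⊆ γ) (hcov : CoversCentres γ' γ) : γ ⊆ γ' := by
  intro p hp
  obtain ⟨q, hq, hpq⟩ := hcov p hp
  by_contra hp'
  exact hγ p hp q (hsub hq) (fun h => hp' (h ▸ hq)) hpq

theorem BallsDisconnected.insert [DecidableEq Ω] {γ : Finset (Ω × ℝ)} {p : Ω × ℝ}
    (hγ : BallsDisconnected γ) (hp_out : ∀ q ∈ γ, ¬ dist q.1 p.1 ≤ p.2)
    (hp_in : ∀ q ∈ γ, ¬ dist p.1 q.1 ≤ q.2) : BallsDisconnected (insert p γ) := by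
  intro a ha b hb hab
  rcases Finset.mem_insert.1 ha with rfl | haγ <;> rcases Finset.mem_insert.1 hb with rfl | hbγ
  · exact absurd rfl hab
  · exact hp_in b hbγ
  · exact hp_out a haγ
  · exact hγ a haγ b hbγ hab

theorem exists_ballsDisconnected_coversCentres (γ : Finset (Ω × ℝ)) (hγ : ∀ p ∈ γ, 0 ≤ p.2) :
    ∃ γ' ⊆ γ, BallsDisconnected γ' ∧ CoversCentres γ' γ := by
  classical
  induction γ using Finset.strongInduction with
  | _ γ ih =>
  rcases γ.eq_empty_or_nonempty with rfl | hne
  · exact ⟨∅, subset_rfl, by simp [BallsDisconnected], by simp [CoversCentres]⟩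
  obtain ⟨p, hp, hmax⟩ := γ.exists_max_image Prod.snd hne
  set rest := γ.filter fun q => ¬ dist q.1 p.1 ≤ p.2
  have hp_rest : p ∉ rest := by simp [rest, hγ p hp]
  have hrest : rest ⊂ γ := Finset.ssubset_iff_subset_ne.2
    ⟨Finset.filter_subset _ _, fun h => hp_rest (h ▸ hp)⟩
  obtain ⟨γ', hsub, hdisc, hcov⟩ := ih rest hrest fun q hq => hγ q (hrest.subset hq)
  have hsub_rest (q) (hq : q ∈ γ') : q ∈ γ ∧ ¬ dist q.1 p.1 ≤ p.2 :=
    Finset.mem_filter.1 (hsub hq)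
  refine ⟨insert p γ', Finset.insert_subset hp (hsub.trans hrest.subset), ?_, ?_⟩
  · refine hdisc.insert (fun q hq => (hsub_rest q hq).2) fun q hq hpq => ?_
    obtain ⟨hqγ, hq_out⟩ := hsub_rest q hq
    exact hq_out (by rw [dist_comm]; linarith [hmax q hqγ])
  · intro q hq
    by_cases hqp : dist q.1 p.1 ≤ p.2
    · exact ⟨p, Finset.mem_insert_self _ _, hqp⟩
    · obtain ⟨r, hr, hqr⟩ := hcov q (Finset.mem_filter.2 ⟨hq, hqp⟩)
      exact ⟨r, Finset.mem_insert_of_mem hr, hqr⟩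

end

/-- `X` has Nagata dimension `≤ δ` in `Ω` on scale `s` iff every finite
disconnected family of closed balls in `Ω` of radii `< s` with centres in `X`
has multiplicity `≤ δ + 1`. -/
theorem nagataDimOnLE_iff_disconnected {Ω : Type*} [MetricSpace Ω] (X : Set Ω)
    (δ : ℕ) (s : ℝ≥0∞) :
    NagataDimOnLE X δ s ↔
      ∀ γ : Finset (Ω × ℝ), (∀ p ∈ γ, p.1 ∈ X ∧ 0 ≤ p.2 ∧ ENNReal.ofReal p.2 < s) →
        BallsDisconnected γ → BallMultLE γ (δ + 1) := by
  constructor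
  · intro h γ hγ hdisc
    obtain ⟨γ', hsub, hmult, hcov⟩ := h γ hγ
    rwa [(hdisc.subset_of_coversCentres hsub hcov).antisymm hsub]
  · intro h γ hγ
    obtain ⟨γ', hsub, hdisc, hcov⟩ :=
      exists_ballsDisconnected_coversCentres γ fun p hp => (hγ p hp).2.1
    exact ⟨γ', hsub, h γ' (fun p hp => hγ p (hsub hp)) hdisc, hcov⟩
end

section
/- For a subspace X of a metric space Ω and scale s, the following are equivalent: (1) every finite family of closed balls of radii < s with centres in X admits a subfamily of multiplicity ≤ δ+1 covering all centres; (2) the same holds for finite families of open balls of radii < s with centres in X; (3) every finite disconnected family of open balls of radii < s with centres in X has multiplicity ≤ δ+1. -/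
/-!
Greedy selection (keep a ball of maximal radius, discard the members whose centre it contains,
repeat) extracts from a finite family a subfamily that still covers all centres and in which no
centre lies in another member's ball; conversely, a family of the latter kind has no proper
subfamily covering its centres. Closed and open balls are exchanged by changing all radii by a
small amount, which finiteness allows without affecting any of the finitely many strict
inequalities involved.
-/

open Metric ENNReal

/-- Multiplicity `≤ m` for a finite family of closed balls. -/
def ClosedBallMultLE {Ω : Type*} [MetricSpace Ω] (γ : Finset (Ω × ℝ)) (m : ℕ) : Prop :=
  ∀ y : Ω, (γ.filter fun p => dist y p.1 ≤ p.2).card ≤ m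

/-- Multiplicity `≤ m` for a finite family of open balls. -/
def OpenBallMultLE {Ω : Type*} [MetricSpace Ω] (γ : Finset (Ω × ℝ)) (m : ℕ) : Prop :=
  ∀ y : Ω, (γ.filter fun p => dist y p.1 < p.2).card ≤ m

/-- A family of open balls is disconnected if no centre belongs to another ball
of the family. -/
def OpenBallsDisconnected {Ω : Type*} [MetricSpace Ω] (γ : Finset (Ω × ℝ)) : Prop :=
  ∀ p ∈ γ, ∀ q ∈ γ, p ≠ q → ¬ dist p.1 q.1 < q.2

open Filter Topology

namespace Finset

variable {α : Type*} {covers : α → α → Prop}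

theorem exists_subset_not_covers_forall_covered {β : Type*} [LinearOrder β] (w : α → β)
    (γ : Finset α) (hrefl : ∀ p ∈ γ, covers p p)
    (hsymm : ∀ p ∈ γ, ∀ q ∈ γ, w q ≤ w p → covers q p → covers p q) :
    ∃ γ' ⊆ γ, (∀ p ∈ γ', ∀ q ∈ γ', p ≠ q → ¬ covers q p) ∧ ∀ p ∈ γ, ∃ q ∈ γ', covers q p := by
  classical
  induction γ using Finset.strongInduction with
  | _ γ ih =>
    rcases γ.eq_empty_or_nonempty with rfl | hne
    · exact ⟨∅, subset_refl _, by simp, by simp⟩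
    obtain ⟨p, hp, hmax⟩ := γ.exists_max_image w hne
    set rest := γ.filter (¬ covers p ·)
    have hrest : rest ⊂ γ := (ssubset_iff_of_subset (filter_subset _ _)).2
      ⟨p, hp, fun h => (mem_filter.1 h).2 (hrefl p hp)⟩
    obtain ⟨γ', hsub, hsep, hcov⟩ := ih rest hrest
      (fun q hq => hrefl q (filter_subset _ _ hq))
      (fun a ha b hb => hsymm a (filter_subset _ _ ha) b (filter_subset _ _ hb))
    have hγ' : ∀ q ∈ γ', q ∈ γ ∧ ¬ covers p q := fun q hq => mem_filter.1 (hsub hq)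
    refine ⟨insert p γ', insert_subset hp fun q hq => (hγ' q hq).1, ?_, ?_⟩
    · intro a ha b hb hab
      rcases mem_insert.1 ha with rfl | ha' <;> rcases mem_insert.1 hb with rfl | hb'
      · exact absurd rfl hab
      · exact fun hba => (hγ' b hb').2 (hsymm a hp b (hγ' b hb').1 (hmax b (hγ' b hb').1) hba)
      · exact (hγ' a ha').2
      · exact hsep a ha' b hb' hab
    · intro q hq
      by_cases hpq : covers p q
      · exact ⟨p, mem_insert_self _ _, hpq⟩
      · obtain ⟨r, hr, hrq⟩ := hcov q (mem_filter.2 ⟨hq, hpq⟩)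
        exact ⟨r, mem_insert_of_mem hr, hrq⟩

theorem eq_of_subset_of_forall_covered {γ γ' : Finset α} (hsub : γ' ⊆ γ)
    (hsep : ∀ p ∈ γ, ∀ q ∈ γ, p ≠ q → ¬ covers q p) (hcov : ∀ p ∈ γ, ∃ q ∈ γ', covers q p) :
    γ' = γ := by
  refine Subset.antisymm hsub fun p hp => ?_
  obtain ⟨q, hq, hqp⟩ := hcov p hp
  obtain rfl : p = q := by_contra fun hpq => hsep p hp q (hsub hq) hpq hqp
  exact hq

end Finset

theorem eventually_add_lt {a b : ℝ} (h : a < b) : ∀ᶠ t in 𝓝 (0 : ℝ), a + t < b :=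
  ((continuous_const_add a).tendsto' 0 a (add_zero a)).eventually_lt_const h

theorem eventually_lt_add {a b : ℝ} (h : a < b) : ∀ᶠ t in 𝓝 (0 : ℝ), a < b + t :=
  ((continuous_const_add b).tendsto' 0 b (add_zero b)).eventually_const_lt h

theorem eventually_ofReal_add_lt {a : ℝ} {s : ℝ≥0∞} (h : ENNReal.ofReal a < s) :
    ∀ᶠ t in 𝓝 (0 : ℝ), ENNReal.ofReal (a + t) < s :=
  ((ENNReal.continuous_ofReal.comp (continuous_const_add a)).tendsto' 0 _
    (by simp)).eventually_lt_const h

section BallFamilies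

variable {Ω : Type*}

def shiftRadii (γ : Finset (Ω × ℝ)) (t : ℝ) : Finset (Ω × ℝ) :=
  γ.map ((Function.Embedding.refl Ω).prodMap (addRightEmbedding t))

theorem forall_mem_shiftRadii {γ : Finset (Ω × ℝ)} {t : ℝ} {P : Ω × ℝ → Prop} :
    (∀ q ∈ shiftRadii γ t, P q) ↔ ∀ p ∈ γ, P (p.1, p.2 + t) :=
  Finset.forall_mem_map

theorem card_filter_le_card_filter_shiftRadii {γ : Finset (Ω × ℝ)} {t : ℝ}
    {P Q : Ω × ℝ → Prop} [DecidablePred P] [DecidablePred Q]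
    (h : ∀ p ∈ γ, P p → Q (p.1, p.2 + t)) :
    (γ.filter P).card ≤ ((shiftRadii γ t).filter Q).card := by
  refine Finset.card_le_card_of_injOn (fun p => (p.1, p.2 + t)) (fun p hp => ?_)
    (fun p _ q _ hpq => ?_)
  · obtain ⟨hpγ, hP⟩ := Finset.mem_filter.1 hp
    exact Finset.mem_filter.2 ⟨Finset.mem_map_of_mem _ hpγ, h p hpγ hP⟩
  · simp only [Prod.mk.injEq] at hpq
    exact Prod.ext hpq.1 (add_right_cancel hpq.2)

variable [MetricSpace Ω] (X : Set Ω) (s : ℝ≥0∞) (m : ℕ)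

def ClosedBallsCoverWithMultLE : Prop :=
  ∀ γ : Finset (Ω × ℝ), (∀ p ∈ γ, p.1 ∈ X ∧ 0 ≤ p.2 ∧ ENNReal.ofReal p.2 < s) →
    ∃ γ' ⊆ γ, ClosedBallMultLE γ' m ∧ ∀ p ∈ γ, ∃ q ∈ γ', dist p.1 q.1 ≤ q.2

def OpenBallsCoverWithMultLE : Prop :=
  ∀ γ : Finset (Ω × ℝ), (∀ p ∈ γ, p.1 ∈ X ∧ 0 < p.2 ∧ ENNReal.ofReal p.2 < s) →
    ∃ γ' ⊆ γ, OpenBallMultLE γ' m ∧ ∀ p ∈ γ, ∃ q ∈ γ', dist p.1 q.1 < q.2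

def DisconnectedOpenBallsMultLE : Prop :=
  ∀ γ : Finset (Ω × ℝ), (∀ p ∈ γ, p.1 ∈ X ∧ 0 < p.2 ∧ ENNReal.ofReal p.2 < s) →
    OpenBallsDisconnected γ → OpenBallMultLE γ m

variable {X s m}

theorem DisconnectedOpenBallsMultLE.of_openBallsCover (h : OpenBallsCoverWithMultLE X s m) :
    DisconnectedOpenBallsMultLE X s m := by
  intro γ hγ hdisc
  obtain ⟨γ', hsub, hmult, hcov⟩ := h γ hγ
  rwa [Finset.eq_of_subset_of_forall_covered hsub hdisc hcov] at hmult

theorem OpenBallsCoverWithMultLE.of_disconnected (h : DisconnectedOpenBallsMultLE X s m) :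
    OpenBallsCoverWithMultLE X s m := by
  intro γ hγ
  obtain ⟨γ', hsub, hdisc, hcov⟩ := γ.exists_subset_not_covers_forall_covered Prod.snd
    (covers := fun q p => dist p.1 q.1 < q.2) (fun p hp => by simpa using (hγ p hp).2.1)
    (fun p _ q _ hqp hpq => by rw [dist_comm]; exact hpq.trans_le hqp)
  exact ⟨γ', hsub, h γ' (fun p hp => hγ p (hsub hp)) hdisc, hcov⟩

theorem ClosedBallsCoverWithMultLE.of_disconnected (h : DisconnectedOpenBallsMultLE X s m) :
    ClosedBallsCoverWithMultLE X s m := by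
  intro γ hγ
  obtain ⟨γ', hsub, hsep, hcov⟩ := γ.exists_subset_not_covers_forall_covered Prod.snd
    (covers := fun q p => dist p.1 q.1 ≤ q.2) (fun p hp => by simpa using (hγ p hp).2.1)
    (fun p _ q _ hqp hpq => by rw [dist_comm]; exact hpq.trans hqp)
  refine ⟨γ', hsub, fun y => ?_, hcov⟩
  -- A small enlargement of the radii keeps the family disconnected, and turns every closed
  -- ball into an open ball containing it.
  have hnear : ∀ᶠ t in 𝓝 (0 : ℝ), (∀ p ∈ γ', ∀ q ∈ γ', p ≠ q → q.2 + t < dist p.1 q.1) ∧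
      ∀ p ∈ γ', ENNReal.ofReal (p.2 + t) < s := by
    refine ((eventually_all_finset γ').2 fun p hp =>
      (eventually_all_finset γ').2 fun q hq => ?_).and
      ((eventually_all_finset γ').2 fun p hp => eventually_ofReal_add_lt (hγ p (hsub hp)).2.2)
    by_cases hpq : p = q
    · exact Eventually.of_forall fun _ h => absurd hpq h
    · exact (eventually_add_lt (not_le.1 (hsep p hp q hq hpq))).mono fun _ h _ => h
  obtain ⟨t, ⟨hsep', hs'⟩, ht⟩ := ((hnear.filter_mono nhdsWithin_le_nhds).and
    (eventually_mem_nhdsWithin (s := Set.Ioi 0))).exists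
  have ht : 0 < t := ht
  have hmult := h (shiftRadii γ' t)
    (forall_mem_shiftRadii.2 fun p hp => ⟨(hγ p (hsub hp)).1,
      add_pos_of_nonneg_of_pos (hγ p (hsub hp)).2.1 ht, hs' p hp⟩)
    (forall_mem_shiftRadii.2 fun p hp => forall_mem_shiftRadii.2 fun q hq hne =>
      not_lt.2 (hsep' p hp q hq (fun hpq => hne (hpq ▸ rfl))).le) y
  exact (card_filter_le_card_filter_shiftRadii (Q := fun p => dist y p.1 < p.2)
    fun p _ hyp => hyp.trans_lt (lt_add_of_pos_right _ ht)).trans hmult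

theorem DisconnectedOpenBallsMultLE.of_closedBallsCover (h : ClosedBallsCoverWithMultLE X s m) :
    DisconnectedOpenBallsMultLE X s m := by
  intro γ hγ hdisc y
  -- After a small shrinking of the radii, `y` still lies in the balls that contained it and no
  -- centre lies in another closed ball, so the cover given by `h` is the whole shrunk family.
  have hnear : ∀ᶠ t in 𝓝 (0 : ℝ), ∀ p ∈ γ, (0 < p.2 + t ∧ ENNReal.ofReal (p.2 + t) < s) ∧
      (dist y p.1 < p.2 → dist y p.1 < p.2 + t) := by
    refine (eventually_all_finset γ).2 fun p hp => ?_
    refine ((eventually_lt_add (hγ p hp).2.1).and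
      (eventually_ofReal_add_lt (hγ p hp).2.2)).and ?_
    by_cases hyp : dist y p.1 < p.2
    · exact (eventually_lt_add hyp).mono fun _ h _ => h
    · exact Eventually.of_forall fun _ h => absurd h hyp
  obtain ⟨t, hnear, ht⟩ := ((hnear.filter_mono nhdsWithin_le_nhds).and
    (eventually_mem_nhdsWithin (s := Set.Iio 0))).exists
  have ht : t < 0 := ht
  set Γ := shiftRadii γ t
  obtain ⟨Γ', hsub, hmult, hcov⟩ := h Γ (forall_mem_shiftRadii.2 fun p hp =>
    ⟨(hγ p hp).1, (hnear p hp).1.1.le, (hnear p hp).1.2⟩)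
  have hsep : ∀ a ∈ Γ, ∀ b ∈ Γ, a ≠ b → ¬ dist a.1 b.1 ≤ b.2 :=
    forall_mem_shiftRadii.2 fun p hp => forall_mem_shiftRadii.2 fun q hq hne hle =>
      hdisc p hp q hq (fun hpq => hne (hpq ▸ rfl)) (by dsimp only at hle; linarith)
  rw [Finset.eq_of_subset_of_forall_covered hsub hsep hcov] at hmult
  exact (card_filter_le_card_filter_shiftRadii (Q := fun p => dist y p.1 ≤ p.2)
    fun p hp hyp => ((hnear p hp).2 hyp).le).trans (hmult y)

end BallFamilies

/-- For a subspace `X` of a metric space `Ω` and a scale `s`, the following are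
equivalent: (1) every finite family of closed balls of radii `< s` with centres
in `X` admits a subfamily of multiplicity `≤ δ + 1` covering all the centres;
(2) the same for families of open balls; (3) every finite disconnected family of
open balls of radii `< s` with centres in `X` has multiplicity `≤ δ + 1`. -/
theorem nagataDimOnLE_open_closed_disconnected_tfae {Ω : Type*} [MetricSpace Ω]
    (X : Set Ω) (δ : ℕ) (s : ℝ≥0∞) :
    [(∀ γ : Finset (Ω × ℝ), (∀ p ∈ γ, p.1 ∈ X ∧ 0 ≤ p.2 ∧ ENNReal.ofReal p.2 < s) →
        ∃ γ' ⊆ γ, ClosedBallMultLE γ' (δ + 1) ∧ ∀ p ∈ γ, ∃ q ∈ γ', dist p.1 q.1 ≤ q.2),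
      (∀ γ : Finset (Ω × ℝ), (∀ p ∈ γ, p.1 ∈ X ∧ 0 < p.2 ∧ ENNReal.ofReal p.2 < s) →
        ∃ γ' ⊆ γ, OpenBallMultLE γ' (δ + 1) ∧ ∀ p ∈ γ, ∃ q ∈ γ', dist p.1 q.1 < q.2),
      (∀ γ : Finset (Ω × ℝ), (∀ p ∈ γ, p.1 ∈ X ∧ 0 < p.2 ∧ ENNReal.ofReal p.2 < s) →
        OpenBallsDisconnected γ → OpenBallMultLE γ (δ + 1))].TFAE := by
  tfae_have 1 → 3 := DisconnectedOpenBallsMultLE.of_closedBallsCover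
  tfae_have 3 → 1 := ClosedBallsCoverWithMultLE.of_disconnected
  tfae_have 3 → 2 := OpenBallsCoverWithMultLE.of_disconnected
  tfae_have 2 → 3 := DisconnectedOpenBallsMultLE.of_openBallsCover
  tfae_finish
end

section
/- If X and Y are subspaces of a metric space Ω with Nagata dimensions ≤ δ₁ and ≤ δ₂ in Ω on scales s₁ and s₂ respectively, then X ∪ Y has Nagata dimension ≤ δ₁ + δ₂ + 1 in Ω on scale min{s₁, s₂} (i.e., every finite family of closed balls of radii < min{s₁,s₂} with centres in X ∪ Y admits a subfamily of multiplicity ≤ δ₁ + δ₂ + 2 covering all the centres). -/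
open Metric ENNReal

open Finset

theorem BallMultLE.union {Ω : Type*} [MetricSpace Ω] [DecidableEq Ω] {γ₁ γ₂ : Finset (Ω × ℝ)}
    {m₁ m₂ : ℕ} (h₁ : BallMultLE γ₁ m₁) (h₂ : BallMultLE γ₂ m₂) :
    BallMultLE (γ₁ ∪ γ₂) (m₁ + m₂) := fun y => by
  rw [filter_union]
  exact (card_union_le _ _).trans (add_le_add (h₁ y) (h₂ y))

namespace NagataDimOnLE

variable {Ω : Type*} [MetricSpace Ω] {X Y : Set Ω} {δ δ₁ δ₂ : ℕ} {s t : ℝ≥0∞}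

theorem mono_scale (h : NagataDimOnLE X δ t) (hst : s ≤ t) : NagataDimOnLE X δ s :=
  fun γ hγ => h γ fun p hp => ⟨(hγ p hp).1, (hγ p hp).2.1, (hγ p hp).2.2.trans_le hst⟩

theorem union (hX : NagataDimOnLE X δ₁ s) (hY : NagataDimOnLE Y δ₂ s) :
    NagataDimOnLE (X ∪ Y) (δ₁ + δ₂ + 1) s := by
  classical
  intro γ hγ
  obtain ⟨γX, hγX, hmultX, hcovX⟩ := hX (γ.filter (·.1 ∈ X)) fun p hp => by
    rw [mem_filter] at hp
    exact ⟨hp.2, (hγ p hp.1).2⟩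
  obtain ⟨γY, hγY, hmultY, hcovY⟩ := hY (γ.filter (·.1 ∉ X)) fun p hp => by
    rw [mem_filter] at hp
    exact ⟨(hγ p hp.1).1.resolve_left hp.2, (hγ p hp.1).2⟩
  refine ⟨γX ∪ γY, union_subset (hγX.trans (filter_subset _ _)) (hγY.trans (filter_subset _ _)),
    add_add_add_comm δ₁ 1 δ₂ 1 ▸ hmultX.union hmultY, fun p hp => ?_⟩
  by_cases hpX : p.1 ∈ X
  · obtain ⟨q, hq, hd⟩ := hcovX p (mem_filter.2 ⟨hp, hpX⟩)
    exact ⟨q, mem_union_left _ hq, hd⟩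
  · obtain ⟨q, hq, hd⟩ := hcovY p (mem_filter.2 ⟨hp, hpX⟩)
    exact ⟨q, mem_union_right _ hq, hd⟩

end NagataDimOnLE

/-- If `X` and `Y` have Nagata dimensions `≤ δ₁`, `≤ δ₂` in `Ω` on scales `s₁`,
`s₂`, then `X ∪ Y` has Nagata dimension `≤ δ₁ + δ₂ + 1` in `Ω` on the scale
`min s₁ s₂`. -/
theorem nagataDimOnLE_union {Ω : Type*} [MetricSpace Ω] (X Y : Set Ω)
    (δ₁ δ₂ : ℕ) (s₁ s₂ : ℝ≥0∞) (hX : NagataDimOnLE X δ₁ s₁)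
    (hY : NagataDimOnLE Y δ₂ s₂) :
    NagataDimOnLE (X ∪ Y) (δ₁ + δ₂ + 1) (min s₁ s₂) :=
  (hX.mono_scale (min_le_left _ _)).union (hY.mono_scale (min_le_right _ _))
end
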